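/- arXiv:1301.1226 — 4 statements merged into one kernel-verified Lean document; each statement's English description precedes it below -/
import Mathlib

section
/- Let Λ₁ and Λ₂ be vertex lattices in C. Then (Λ₁ ∩ Λ₂)^♯ = Λ₁^♯ + Λ₂^♯, and the following are equivalent: (i) Λ₁ ∩ Λ₂ is a vertex lattice; (ii) Λ₁^♯ ⊆ Λ₂; (iii) Λ₂^♯ ⊆ Λ₁. -/
/-! The `π`-coordinate of `h`, in the `ℚ_p`-basis `1, π` of `E`, is an alternating nondegenerate
`ℚ_p`-bilinear form `B` on `C`. Since `𝒪_E = ℤ_p ⊕ ℤ_p π` and the `1`-coordinate of `h x y` is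
minus the `π`-coordinate of `h x (π y)`, the hermitian dual of a `π`-stable lattice is its
`B`-dual. Duality of `ℤ_p`-lattices with respect to `B` is an inclusion-reversing involution, so
`Λ₁ ∩ Λ₂ = (Λ₁^♯ + Λ₂^♯)^♯` gives `(Λ₁ ∩ Λ₂)^♯ = Λ₁^♯ + Λ₂^♯`, and `Λ₁^♯ ⊆ Λ₂` dualizes to
`Λ₂^♯ ⊆ Λ₁`. Finally `Λ₁ ∩ Λ₂` is a vertex lattice iff `Λ₁^♯ + Λ₂^♯ ⊆ Λ₁ ∩ Λ₂`, i.e. iff both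
of these inclusions hold. -/

open scoped Pointwise
/- Setup: `p` an odd prime, `E` a ramified quadratic extension of `ℚ_p` with Galois automorphism
`σ`, uniformizer `π` (with `π² = π₀ ∈ ℚ_p` a uniformizer, `σ π = -π`), ring of integers
`𝒪_E = integralClosure ℤ_p E`.  `C` is an `n`-dimensional `E`-vector space with a nondegenerate
hermitian form `h`.  An `𝒪_E`-lattice in `C` is modelled as a finitely generated `ℤ_p`-submodule
`Λ` which spans `C` over `ℚ_p` and is stable under `π` (note `𝒪_E = ℤ_p[π]`). -/

variable (p : ℕ) [Fact p.Prime]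
variable {E : Type} [Field E] [Algebra ℚ_[p] E] [Algebra ℤ_[p] E] [IsScalarTower ℤ_[p] ℚ_[p] E]
variable {C : Type} [AddCommGroup C] [Module E C] [Module ℚ_[p] C] [Module ℤ_[p] C]
  [IsScalarTower ℚ_[p] E C] [IsScalarTower ℤ_[p] E C] [IsScalarTower ℤ_[p] ℚ_[p] C]

/-- The dual lattice `Λ^♯ = {x ∈ C : h x y ∈ 𝒪_E for all y ∈ Λ}` (as a set). -/
def sharpSet (h : C → C → E) (Λ : Submodule ℤ_[p] C) : Set C :=
  {x | ∀ y ∈ Λ, h x y ∈ integralClosure ℤ_[p] E}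

/-- `Λ` is an `𝒪_E`-lattice in `C`: finitely generated, full, and stable under `π`. -/
def IsOLattice (π : E) (Λ : Submodule ℤ_[p] C) : Prop :=
  Λ.FG ∧ Submodule.span ℚ_[p] (Λ : Set C) = ⊤ ∧ ∀ x ∈ Λ, π • x ∈ Λ

/-- `Λ` is a vertex lattice: an `𝒪_E`-lattice with `πΛ ⊆ Λ^♯ ⊆ Λ`. -/
def IsVertexLattice (π : E) (h : C → C → E) (Λ : Submodule ℤ_[p] C) : Prop :=
  IsOLattice p π Λ ∧ (∀ x ∈ Λ, π • x ∈ sharpSet p h Λ) ∧ sharpSet p h Λ ⊆ (Λ : Set C)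

/-- The type of a vertex lattice `Λ` is `t` iff the `𝔽_p`-vector space `Λ/Λ^♯` has
dimension `t`, i.e. the index `[Λ : Λ^♯]` equals `p^t`. -/
def HasTypeN (h : C → C → E) (Λ : Submodule ℤ_[p] C) (t : ℕ) : Prop :=
  (AddSubgroup.closure (sharpSet p h Λ)).relIndex Λ.toAddSubgroup = p ^ t

open Module Submodule

section LatticeDuality

variable {R K V : Type*} [CommRing R] [Field K] [Algebra R K] [AddCommGroup V] [Module K V]
  [Module R V] [IsScalarTower R K V]

lemma Module.Basis.span_extendOfIsLattice [IsFractionRing R K] {Λ : Submodule R V}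
    [IsLattice K Λ] {κ : Type*} (b : Basis κ R Λ) :
    span R (Set.range (b.extendOfIsLattice K)) = Λ := by
  rw [show ⇑(b.extendOfIsLattice K) = Λ.subtype ∘ b from funext (b.extendOfIsLattice_apply K),
    Set.range_comp, ← map_span, b.span_eq, Submodule.map_top, range_subtype]

lemma Module.Finite.of_isLattice (Λ : Submodule R V) [IsLattice K Λ] : Module.Finite K V := by
  obtain ⟨s, hs⟩ := IsLattice.fg (M := Λ)
  exact ⟨⟨s, by rw [← span_span_of_tower R, hs, IsLattice.span_eq_top]⟩⟩

namespace LinearMap.BilinForm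

variable {B : LinearMap.BilinForm K V}

lemma dualSubmodule_sup (N₁ N₂ : Submodule R V) :
    B.dualSubmodule (N₁ ⊔ N₂) = B.dualSubmodule N₁ ⊓ B.dualSubmodule N₂ := by
  ext x
  simp only [Submodule.mem_inf, mem_dualSubmodule]
  refine ⟨fun hx => ⟨fun y hy => hx y (mem_sup_left hy), fun y hy => hx y (mem_sup_right hy)⟩,
    fun ⟨hx₁, hx₂⟩ y hy => ?_⟩
  obtain ⟨y₁, hy₁, y₂, hy₂, rfl⟩ := mem_sup.mp hy
  rw [map_add]
  exact add_mem (hx₁ y₁ hy₁) (hx₂ y₂ hy₂)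

lemma dualSubmodule_anti {N₁ N₂ : Submodule R V} (h : N₁ ≤ N₂) :
    B.dualSubmodule N₂ ≤ B.dualSubmodule N₁ :=
  fun _ hx y hy => hx y (h hy)

lemma IsAlt.flip_dualSubmodule (hB : B.IsAlt) (N : Submodule R V) :
    B.flip.dualSubmodule N = B.dualSubmodule N := by
  ext x
  simp only [mem_dualSubmodule, flip_apply, ← hB.neg_eq x, Submodule.neg_mem_iff]

variable [IsDomain R] [IsPrincipalIdealRing R] [IsFractionRing R K] (hB : B.Nondegenerate)
include hB

lemma isLattice_dualSubmodule (Λ : Submodule R V) [IsLattice K Λ] :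
    IsLattice K (B.dualSubmodule Λ) := by
  classical
  let b := (Module.Free.chooseBasis R Λ).extendOfIsLattice K
  rw [← (Module.Free.chooseBasis R Λ).span_extendOfIsLattice, B.dualSubmodule_span_of_basis hB b]
  exact ⟨fg_span (Set.finite_range _), by rw [span_span_of_tower, (B.dualBasis hB b).span_eq]⟩

lemma dualSubmodule_dualSubmodule_flip (Λ : Submodule R V) [IsLattice K Λ] :
    B.dualSubmodule (B.flip.dualSubmodule Λ) = Λ := by
  rw [← (Module.Free.chooseBasis R Λ).span_extendOfIsLattice]
  exact B.dualSubmodule_dualSubmodule_flip_of_basis hB _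

variable (hB' : B.IsAlt)
include hB'

lemma IsAlt.dualSubmodule_dualSubmodule (Λ : Submodule R V) [IsLattice K Λ] :
    B.dualSubmodule (B.dualSubmodule Λ) = Λ := by
  rw [← hB'.flip_dualSubmodule Λ, dualSubmodule_dualSubmodule_flip hB]

lemma IsAlt.dualSubmodule_inf (Λ₁ Λ₂ : Submodule R V) [IsLattice K Λ₁] [IsLattice K Λ₂] :
    B.dualSubmodule (Λ₁ ⊓ Λ₂) = B.dualSubmodule Λ₁ ⊔ B.dualSubmodule Λ₂ := by
  have := isLattice_dualSubmodule hB Λ₁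
  have := isLattice_dualSubmodule hB Λ₂
  conv_lhs => rw [← hB'.dualSubmodule_dualSubmodule hB Λ₁,
    ← hB'.dualSubmodule_dualSubmodule hB Λ₂, ← dualSubmodule_sup,
    hB'.dualSubmodule_dualSubmodule hB]

lemma IsAlt.dualSubmodule_le_comm {Λ₁ Λ₂ : Submodule R V} [IsLattice K Λ₁] [IsLattice K Λ₂] :
    B.dualSubmodule Λ₁ ≤ Λ₂ ↔ B.dualSubmodule Λ₂ ≤ Λ₁ := by
  constructor <;> intro h <;>
    simpa only [hB'.dualSubmodule_dualSubmodule hB] using dualSubmodule_anti (B := B) h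

lemma IsAlt.dualSubmodule_inf_le_inf_iff {Λ₁ Λ₂ : Submodule R V} [IsLattice K Λ₁] [IsLattice K Λ₂]
    (h₁ : B.dualSubmodule Λ₁ ≤ Λ₁) (h₂ : B.dualSubmodule Λ₂ ≤ Λ₂) :
    B.dualSubmodule (Λ₁ ⊓ Λ₂) ≤ Λ₁ ⊓ Λ₂ ↔ B.dualSubmodule Λ₁ ≤ Λ₂ := by
  rw [hB'.dualSubmodule_inf hB, sup_le_iff, le_inf_iff, le_inf_iff]
  have := hB'.dualSubmodule_le_comm hB (Λ₁ := Λ₁) (Λ₂ := Λ₂)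
  tauto

end LinearMap.BilinForm

end LatticeDuality

section Conjugation

variable {K L : Type*} [Field K] [Field L] [Algebra K L] {σ : L ≃ₐ[K] L} {π : L}

lemma linearIndependent_one_of_apply_eq_neg (hσπ : σ π = -π) (hπ : π ≠ 0) (h2 : (2 : L) ≠ 0) :
    LinearIndependent K ![1, π] := by
  rw [LinearIndependent.pair_iff]
  intro s t hst
  rw [Algebra.smul_def, Algebra.smul_def, mul_one] at hst
  have hconj : algebraMap K L s - algebraMap K L t * π = 0 := by
    simpa [hσπ, sub_eq_add_neg] using congrArg σ hst
  have ht : algebraMap K L t * π * 2 = 0 := by linear_combination hst - hconj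
  have ht : t = 0 := by simpa [hπ, h2] using ht
  subst ht
  simpa using hst

lemma exists_basis_one_pi (hσπ : σ π = -π) (hπ : π ≠ 0) (h2 : (2 : L) ≠ 0)
    (hrank : finrank K L = 2) : ∃ b : Basis (Fin 2) K L, b 0 = 1 ∧ b 1 = π := by
  let b := basisOfLinearIndependentOfCardEqFinrank
    (linearIndependent_one_of_apply_eq_neg hσπ hπ h2) (by simp [hrank])
  exact ⟨b, by simp [b], by simp [b]⟩

variable {b : Basis (Fin 2) K L} (hb₀ : b 0 = 1) (hb₁ : b 1 = π)
include hb₀ hb₁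

lemma Module.Basis.algebraMap_add_smul_eq (u v : K) :
    algebraMap K L u + v • π = u • b 0 + v • b 1 := by
  rw [hb₀, hb₁, Algebra.algebraMap_eq_smul_one]

lemma Module.Basis.coord_one_algebraMap_add_smul (u v : K) :
    b.coord 1 (algebraMap K L u + v • π) = v := by
  simp [b.algebraMap_add_smul_eq hb₀ hb₁]

lemma Module.Basis.algebraMap_coord_add_coord_smul (a : L) :
    algebraMap K L (b.coord 0 a) + b.coord 1 a • π = a := by
  rw [b.algebraMap_add_smul_eq hb₀ hb₁]
  simpa only [Fin.sum_univ_two, Basis.coord_apply] using b.sum_repr a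

lemma Module.Basis.coord_one_apply_eq_neg (hσπ : σ π = -π) (a : L) :
    b.coord 1 (σ a) = -b.coord 1 a := by
  conv_lhs => rw [← b.algebraMap_coord_add_coord_smul hb₀ hb₁ a]
  rw [map_add, AlgEquiv.commutes, map_smul, hσπ, smul_neg, ← neg_smul,
    b.coord_one_algebraMap_add_smul hb₀ hb₁]

lemma Module.Basis.coord_one_pi_mul {π₀ : K} (hπ₀ : algebraMap K L π₀ = π ^ 2) (a : L) :
    b.coord 1 (π * a) = b.coord 0 a := by
  have : π * a = algebraMap K L (b.coord 1 a * π₀) + b.coord 0 a • π := by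
    conv_lhs => rw [← b.algebraMap_coord_add_coord_smul hb₀ hb₁ a]
    rw [map_mul, hπ₀, Algebra.smul_def, Algebra.smul_def]
    ring
  rw [this, b.coord_one_algebraMap_add_smul hb₀ hb₁]

end Conjugation

section HermitianForm

variable {K L M : Type*} [Field K] [Field L] [Algebra K L] [AddCommGroup M] [Module L M]

structure IsHermitianForm (σ : L ≃ₐ[K] L) (h : M → M → L) : Prop where
  add_left : ∀ x x' y, h (x + x') y = h x y + h x' y
  smul_left : ∀ (a : L) (x y : M), h (a • x) y = a * h x y
  conj_symm : ∀ x y, h y x = σ (h x y)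

variable {σ : L ≃ₐ[K] L} {h : M → M → L} (hh : IsHermitianForm σ h)
include hh

namespace IsHermitianForm

lemma add_right (x y y' : M) : h x (y + y') = h x y + h x y' := by
  rw [hh.conj_symm, hh.add_left, map_add, ← hh.conj_symm, ← hh.conj_symm]

lemma smul_right (a : L) (x y : M) : h x (a • y) = σ a * h x y := by
  rw [hh.conj_symm, hh.smul_left, map_mul, ← hh.conj_symm]

lemma exists_bilinForm_eq_comp [Module K M] [IsScalarTower K L M] (c : L →ₗ[K] K) :
    ∃ B : LinearMap.BilinForm K M, ∀ x y, B x y = c (h x y) := by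
  refine ⟨LinearMap.mk₂ K (fun x y => c (h x y)) (fun x x' y => by rw [hh.add_left, map_add])
    (fun q x y => ?_) (fun x y y' => by rw [hh.add_right, map_add]) (fun q x y => ?_),
    fun _ _ => rfl⟩
  · rw [← algebraMap_smul L q x, hh.smul_left, ← Algebra.smul_def, map_smul, smul_eq_mul]
  · rw [← algebraMap_smul L q y, hh.smul_right, AlgEquiv.commutes, ← Algebra.smul_def, map_smul,
      smul_eq_mul]

variable [Module K M] {π : L} (hσπ : σ π = -π) {b : Basis (Fin 2) K L} (hb₀ : b 0 = 1)
  (hb₁ : b 1 = π) {B : LinearMap.BilinForm K M} (hB : ∀ x y, B x y = b.coord 1 (h x y))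
include hσπ hb₀ hb₁ hB

lemma isAlt_of_eq_coord_one [CharZero K] : B.IsAlt := by
  intro x
  rw [hB, ← self_eq_neg]
  conv_lhs => rw [hh.conj_symm]
  exact b.coord_one_apply_eq_neg hb₀ hb₁ hσπ _

variable {π₀ : K} (hπ₀ : algebraMap K L π₀ = π ^ 2)
include hπ₀

lemma apply_smul_right_eq_neg_coord_zero (x y : M) : B x (π • y) = -b.coord 0 (h x y) := by
  rw [hB, hh.smul_right, hσπ, neg_mul, map_neg, b.coord_one_pi_mul hb₀ hb₁ hπ₀]

lemma nondegenerate_of_eq_coord_one [CharZero K] (hnd : ∀ x, (∀ y, h x y = 0) → x = 0) :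
    B.Nondegenerate := by
  refine (hh.isAlt_of_eq_coord_one hσπ hb₀ hb₁ hB).isRefl.nondegenerate_iff_separatingLeft.mpr
    fun x hx => hnd x fun y => ?_
  have h₀ : b.coord 0 (h x y) = 0 := by
    simpa [hx] using (hh.apply_smul_right_eq_neg_coord_zero hσπ hb₀ hb₁ hB hπ₀ x y).symm
  have h₁ : b.coord 1 (h x y) = 0 := (hB x y).symm.trans (hx y)
  rw [← b.algebraMap_coord_add_coord_smul hb₀ hb₁ (h x y), h₀, h₁]
  simp

end IsHermitianForm

end HermitianForm

section Padic

variable {p}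

lemma Padic.norm_two_eq_one (hp2 : p ≠ 2) : ‖(2 : ℚ_[p])‖ = 1 := by
  exact_mod_cast Padic.norm_natCast_eq_one_iff.mpr
    ((Nat.coprime_primes Fact.out Nat.prime_two).mpr hp2)

lemma Padic.norm_le_one_of_sq_le {v : ℚ_[p]} (hv : ‖v‖ ^ 2 ≤ p) : ‖v‖ ≤ 1 := by
  have hp : (1 : ℝ) < p := by exact_mod_cast (Fact.out : p.Prime).one_lt
  -- `‖v‖` is an integral power of `p`, so `‖v‖ > 1` would force `‖v‖ ≥ p`
  have := Padic.norm_le_pow_iff_norm_lt_pow_add_one v 0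
  simp only [zpow_zero, zero_add, zpow_one] at this
  rw [this]
  by_contra! h
  nlinarith

lemma PadicInt.mem_one_submodule_iff (w : ℚ_[p]) :
    w ∈ (1 : Submodule ℤ_[p] ℚ_[p]) ↔ ‖w‖ ≤ 1 :=
  Submodule.mem_one.trans ⟨fun ⟨z, hz⟩ => hz ▸ z.2, fun hw => ⟨⟨w, hw⟩, rfl⟩⟩

lemma Padic.algebraMap_mem_integralClosure_iff (w : ℚ_[p]) :
    algebraMap ℚ_[p] E w ∈ integralClosure ℤ_[p] E ↔ ‖w‖ ≤ 1 := by
  rw [mem_integralClosure_iff, isIntegral_algebraMap_iff (algebraMap ℚ_[p] E).injective,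
    IsIntegrallyClosed.isIntegral_iff]
  exact ⟨fun ⟨z, hz⟩ => hz ▸ z.2, fun hw => ⟨⟨w, hw⟩, rfl⟩⟩

variable {σ : E ≃ₐ[ℚ_[p]] E} {π : E} {π₀ : ℚ_[p]}

lemma mem_integralClosure_of_sq_eq (hπ₀ : algebraMap ℚ_[p] E π₀ = π ^ 2) (hπ₀n : ‖π₀‖ ≤ 1) :
    π ∈ integralClosure ℤ_[p] E := by
  refine IsIntegral.of_pow two_pos ?_
  rw [← hπ₀]
  exact (Padic.algebraMap_mem_integralClosure_iff π₀).mpr hπ₀n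

variable (hp2 : p ≠ 2) (hσπ : σ π = -π) (hπ₀ : algebraMap ℚ_[p] E π₀ = π ^ 2)
  (hπ₀n : ‖π₀‖ = (p : ℝ)⁻¹)
include hp2 hσπ hπ₀ hπ₀n

lemma algebraMap_add_smul_mem_integralClosure_iff (u v : ℚ_[p]) :
    algebraMap ℚ_[p] E u + v • π ∈ integralClosure ℤ_[p] E ↔ ‖u‖ ≤ 1 ∧ ‖v‖ ≤ 1 := by
  have hp : (0 : ℝ) < p := by exact_mod_cast (Fact.out : p.Prime).pos
  constructor
  · intro ha
    -- the conjugate `u - vπ` is integral, hence so are the trace `2u` and the norm `u² - π₀v²`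
    have hconj : algebraMap ℚ_[p] E u - v • π ∈ integralClosure ℤ_[p] E := by
      have : σ (algebraMap ℚ_[p] E u + v • π) = algebraMap ℚ_[p] E u - v • π := by
        simp [hσπ, sub_eq_add_neg]
      exact this ▸ ha.map (σ.toAlgHom.restrictScalars ℤ_[p])
    have htrace : ‖2 * u‖ ≤ 1 := by
      rw [← Padic.algebraMap_mem_integralClosure_iff (E := E)]
      convert add_mem ha hconj using 1
      simp only [map_mul, map_ofNat]
      ring
    have hnorm : ‖u ^ 2 - v ^ 2 * π₀‖ ≤ 1 := by
      rw [← Padic.algebraMap_mem_integralClosure_iff (E := E)]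
      convert mul_mem ha hconj using 1
      simp only [map_sub, map_pow, map_mul, hπ₀, Algebra.smul_def]
      ring
    have hu : ‖u‖ ≤ 1 := by rwa [norm_mul, Padic.norm_two_eq_one hp2, one_mul] at htrace
    have hvπ₀ : ‖v ^ 2 * π₀‖ ≤ 1 := by
      calc ‖v ^ 2 * π₀‖ = ‖u ^ 2 + -(u ^ 2 - v ^ 2 * π₀)‖ := by ring_nf
        _ ≤ max ‖u ^ 2‖ ‖-(u ^ 2 - v ^ 2 * π₀)‖ := Padic.nonarchimedean _ _
        _ ≤ 1 := max_le (by rw [norm_pow]; exact pow_le_one₀ (norm_nonneg _) hu)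
          (by rwa [norm_neg])
    rw [norm_mul, norm_pow, hπ₀n, ← div_eq_mul_inv, div_le_one hp] at hvπ₀
    exact ⟨hu, Padic.norm_le_one_of_sq_le hvπ₀⟩
  · rintro ⟨hu, hv⟩
    rw [Algebra.smul_def]
    refine add_mem ((Padic.algebraMap_mem_integralClosure_iff u).mpr hu)
      (mul_mem ((Padic.algebraMap_mem_integralClosure_iff v).mpr hv) ?_)
    refine mem_integralClosure_of_sq_eq hπ₀ ?_
    rw [hπ₀n]
    exact inv_le_one_of_one_le₀ (by exact_mod_cast (Fact.out : p.Prime).one_lt.le)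

section Coordinates

variable {b : Basis (Fin 2) ℚ_[p] E} (hb₀ : b 0 = 1) (hb₁ : b 1 = π)
include hb₀ hb₁

lemma mem_integralClosure_iff_coord (a : E) :
    a ∈ integralClosure ℤ_[p] E ↔ ‖b.coord 0 a‖ ≤ 1 ∧ ‖b.coord 1 a‖ ≤ 1 := by
  conv_lhs => rw [← b.algebraMap_coord_add_coord_smul hb₀ hb₁ a]
  exact algebraMap_add_smul_mem_integralClosure_iff hp2 hσπ hπ₀ hπ₀n _ _

omit [IsScalarTower ℚ_[p] E C] [IsScalarTower ℤ_[p] E C] in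
lemma sharpSet_eq_dualSubmodule {h : C → C → E} (hh : IsHermitianForm σ h)
    {B : LinearMap.BilinForm ℚ_[p] C} (hB : ∀ x y, B x y = b.coord 1 (h x y))
    (Λ : Submodule ℤ_[p] C) (hΛ : ∀ x ∈ Λ, π • x ∈ Λ) :
    sharpSet p h Λ = B.dualSubmodule Λ := by
  ext x
  simp only [sharpSet, Set.mem_ofPred_eq, SetLike.mem_coe, LinearMap.BilinForm.mem_dualSubmodule,
    PadicInt.mem_one_submodule_iff, mem_integralClosure_iff_coord hp2 hσπ hπ₀ hπ₀n hb₀ hb₁, hB]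
  refine ⟨fun hx y hy => (hx y hy).2, fun hx y hy => ⟨?_, hx y hy⟩⟩
  rw [← norm_neg, ← hh.apply_smul_right_eq_neg_coord_zero hσπ hb₀ hb₁ hB hπ₀, hB]
  exact hx _ (hΛ y hy)

end Coordinates

omit [IsScalarTower ℤ_[p] E C] in
lemma exists_bilinForm_sharpSet_eq_dualSubmodule (hrank : finrank ℚ_[p] E = 2)
    {h : C → C → E} (hh : IsHermitianForm σ h) (hnd : ∀ x, (∀ y, h x y = 0) → x = 0) :
    ∃ B : LinearMap.BilinForm ℚ_[p] C, B.IsAlt ∧ B.Nondegenerate ∧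
      ∀ Λ : Submodule ℤ_[p] C, (∀ x ∈ Λ, π • x ∈ Λ) → sharpSet p h Λ = B.dualSubmodule Λ := by
  have : CharZero E := charZero_of_injective_algebraMap (algebraMap ℚ_[p] E).injective
  have hπ : π ≠ 0 := by
    rintro rfl
    have : π₀ = 0 := by simpa using hπ₀
    simp only [this, norm_zero, zero_eq_inv] at hπ₀n
    exact (Fact.out : p.Prime).ne_zero (by exact_mod_cast hπ₀n.symm)
  obtain ⟨b, hb₀, hb₁⟩ := exists_basis_one_pi hσπ hπ two_ne_zero hrank
  obtain ⟨B, hB⟩ := hh.exists_bilinForm_eq_comp (b.coord 1)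
  exact ⟨B, hh.isAlt_of_eq_coord_one hσπ hb₀ hb₁ hB,
    hh.nondegenerate_of_eq_coord_one hσπ hb₀ hb₁ hB hπ₀ hnd,
    sharpSet_eq_dualSubmodule hp2 hσπ hπ₀ hπ₀n hb₀ hb₁ hh hB⟩

end Padic

theorem statement8
    (hp2 : p ≠ 2)
    (σ : E ≃ₐ[ℚ_[p]] E) (π : E) (hσπ : σ π = -π)
    (hπ : ∃ π₀ : ℚ_[p], algebraMap ℚ_[p] E π₀ = π ^ 2 ∧ ‖π₀‖ = (p : ℝ)⁻¹)
    (hrank : Module.finrank ℚ_[p] E = 2)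
    (h : C → C → E)
    (haddl : ∀ x x' y, h (x + x') y = h x y + h x' y)
    (hsmull : ∀ (a : E) (x y : C), h (a • x) y = a * h x y)
    (hherm : ∀ x y, h y x = σ (h x y))
    (hnd : ∀ x, (∀ y, h x y = 0) → x = 0)
    (Λ₁ Λ₂ : Submodule ℤ_[p] C)
    (h₁ : IsVertexLattice p π h Λ₁) (h₂ : IsVertexLattice p π h Λ₂) :
    sharpSet p h (Λ₁ ⊓ Λ₂) = sharpSet p h Λ₁ + sharpSet p h Λ₂ ∧
    (IsVertexLattice p π h (Λ₁ ⊓ Λ₂) ↔ sharpSet p h Λ₁ ⊆ (Λ₂ : Set C)) ∧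
    (sharpSet p h Λ₁ ⊆ (Λ₂ : Set C) ↔ sharpSet p h Λ₂ ⊆ (Λ₁ : Set C)) := by
  obtain ⟨π₀, hπ₀, hπ₀n⟩ := hπ
  obtain ⟨B, hBalt, hBnd, hsharp⟩ := exists_bilinForm_sharpSet_eq_dualSubmodule hp2 hσπ hπ₀ hπ₀n
    hrank ⟨haddl, hsmull, hherm⟩ hnd
  obtain ⟨⟨hfg₁, hspan₁, hπ₁⟩, hπsharp₁, hsharp_le₁⟩ := h₁
  obtain ⟨⟨hfg₂, hspan₂, hπ₂⟩, -, hsharp_le₂⟩ := h₂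
  have : IsLattice ℚ_[p] Λ₁ := ⟨hfg₁, hspan₁⟩
  have : IsLattice ℚ_[p] Λ₂ := ⟨hfg₂, hspan₂⟩
  have := Module.Finite.of_isLattice Λ₁
  have hπ₁₂ : ∀ x ∈ Λ₁ ⊓ Λ₂, π • x ∈ Λ₁ ⊓ Λ₂ := fun x hx => ⟨hπ₁ x hx.1, hπ₂ x hx.2⟩
  have hvertex : IsVertexLattice p π h (Λ₁ ⊓ Λ₂) ↔ sharpSet p h (Λ₁ ⊓ Λ₂) ⊆ ↑(Λ₁ ⊓ Λ₂) :=
    ⟨fun hV => hV.2.2, fun hle => ⟨⟨IsLattice.fg, IsLattice.span_eq_top, hπ₁₂⟩,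
      fun x hx y hy => hπsharp₁ x hx.1 y hy.1, hle⟩⟩
  rw [hvertex, hsharp _ hπ₁₂, hsharp _ hπ₁, hsharp _ hπ₂]
  rw [hsharp _ hπ₁] at hsharp_le₁
  rw [hsharp _ hπ₂] at hsharp_le₂
  simp only [SetLike.coe_subset_coe]
  exact ⟨by rw [hBalt.dualSubmodule_inf hBnd, coe_sup],
    hBalt.dualSubmodule_inf_le_inf_iff hBnd hsharp_le₁ hsharp_le₂, hBalt.dualSubmodule_le_comm hBnd⟩
end

section
/- Let Λ₁ and Λ₂ be vertex lattices in C. If Λ₁ ∩ Λ₂ is a vertex lattice, then 𝒱_{Λ₁∩Λ₂}(𝔽) = 𝒱_{Λ₁}(𝔽) ∩ 𝒱_{Λ₂}(𝔽); if Λ₁ ∩ Λ₂ is not a vertex lattice, then 𝒱_{Λ₁}(𝔽) ∩ 𝒱_{Λ₂}(𝔽) = ∅. -/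
/- Setup as in the paper: `p` odd, `E/ℚ_p` ramified quadratic with automorphism `σ`, uniformizer
`π` (`σπ = −π`, `π² = π₀` a uniformizer of `ℚ_p`), `C` an `n`-dimensional hermitian `E`-space
(lattices = f.g. full `π`-stable `ℤ_p`-submodules), `⟨x,y⟩ = (1/2)Tr_{E/ℚ_p}(π⁻¹ h x y)`.
`W = W(𝔽)` and `W_ℚ` are modelled as an abstract DVR `A` with fraction field `K`;
`N = C ⊗_{ℚ_p} W_ℚ` carries `ι : C → N`, `τ = id_C ⊗ σK`, the `K`-linear action `Π` of `π`,
the bilinear extension `BN` of `⟨·,·⟩`, and the hermitian extension `HN` with values in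
`Ĕ = K ⊗_{ℚ_p} E` (modelled as `L`, free over `K` with basis `1, π`), characterized by
`HN x y = BN (Πx) y + BN x y · π`; `𝒪_Ĕ = W ⊗ 𝒪_E` is the set of `a + b·π` with `a,b ∈ A`.
`𝒱(𝔽)` is the set of `𝒪_Ĕ`-lattices `M ⊆ N` with `M^♯ = M`, `Πτ(M) ⊆ M ⊆ Π⁻¹τ(M)` and
`length_W((M+τM)/M) ≤ 1`, and `𝒱_Λ(𝔽) = {M ∈ 𝒱(𝔽) : M ⊆ Λ ⊗_{𝒪_E} 𝒪_Ĕ}`. -/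

variable (p : ℕ) [Fact p.Prime]
variable {E : Type} [Field E] [Algebra ℚ_[p] E] [Algebra ℤ_[p] E] [IsScalarTower ℤ_[p] ℚ_[p] E]
variable {C : Type} [AddCommGroup C] [Module E C] [Module ℚ_[p] C] [Module ℤ_[p] C]
  [IsScalarTower ℚ_[p] E C] [IsScalarTower ℤ_[p] E C] [IsScalarTower ℤ_[p] ℚ_[p] C]

/-!
Write `Λ_W` for the `A`-span of `ι Λ`. Two facts about lattices drive the proof.
First, `ι v ∈ Λ_W ↔ v ∈ Λ`: the coordinates of `ι v` in the image of a `ℤ_p`-basis of `Λ` are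
those of `v`, and an element of `ℚ_p` lands in `A` iff it lies in `ℤ_p` (units of `ℤ_p` map to
units of `A` because `u ^ (p - 1)` has `ℓ`-th roots for all primes `ℓ ≠ p`).
Second, `Λ₁_W ⊓ Λ₂_W = (Λ₁ ⊓ Λ₂)_W`: the left side is `τ`-stable, so by descent it is spanned by
its `τ`-invariants `ι v`, and these have `v ∈ Λ₁ ⊓ Λ₂` by the first fact.
The second fact gives `𝒱_{Λ₁ ∩ Λ₂} = 𝒱_{Λ₁} ∩ 𝒱_{Λ₂}` outright. If `M` lies in this set, then
`M ≤ (Λ₁ ⊓ Λ₂)_W`, and since `𝒪_E = ℤ_p + ℤ_p π`, every `x ∈ (Λ₁ ⊓ Λ₂)^♯` has `ι x ∈ M^♯ = M`,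
so `x ∈ Λ₁ ⊓ Λ₂` by the first fact; as `π (Λ₁ ⊓ Λ₂) ⊆ Λ₁^♯ ⊆ (Λ₁ ⊓ Λ₂)^♯`, the intersection is
then a vertex lattice.
-/

section DiscreteValuationRing

variable {A K : Type*} [CommRing A] [Field K] [Algebra A K] [IsFractionRing A K] {ϖ : A}

theorem IsFractionRing.eq_zero_of_zpow_eq_unit (hϖ : Irreducible ϖ) {d : ℤ} {u : Aˣ}
    (h : algebraMap A K ϖ ^ d = algebraMap A K u) : d = 0 := by
  have hnat : ∀ (n : ℕ) (v : Aˣ), algebraMap A K ϖ ^ n = algebraMap A K v → n = 0 := by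
    intro n v hv
    rw [← map_pow] at hv
    have hϖv : ϖ ^ n = v := IsFractionRing.injective A K hv
    by_contra hn
    exact hϖ.not_isUnit (isUnit_of_dvd_unit (dvd_pow_self ϖ hn) (hϖv ▸ v.isUnit))
  obtain ⟨n, rfl | rfl⟩ := Int.eq_nat_or_neg d
  · exact_mod_cast hnat n u (by simpa using h)
  · have : algebraMap A K ϖ ^ n = algebraMap A K ↑u⁻¹ := by
      rw [map_units_inv, ← h, zpow_neg, inv_inv, zpow_natCast]
    simp [hnat n u⁻¹ this]

variable [IsDomain A] [IsDiscreteValuationRing A]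

namespace IsDiscreteValuationRing

theorem eq_of_units_smul_zpow_eq (hϖ : Irreducible ϖ) {m n : ℤ} {u v : Aˣ}
    (h : u • algebraMap A K ϖ ^ m = v • algebraMap A K ϖ ^ n) : m = n := by
  have hϖ0 : algebraMap A K ϖ ≠ 0 := by simpa using hϖ.ne_zero
  have : algebraMap A K ϖ ^ (m - n) = algebraMap A K ↑(v * u⁻¹) := by
    rw [Units.smul_def, Units.smul_def, Algebra.smul_def, Algebra.smul_def] at h
    rw [zpow_sub₀ hϖ0, Units.val_mul, map_mul, map_units_inv]
    field_simp
    linear_combination h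
  linarith [IsFractionRing.eq_zero_of_zpow_eq_unit hϖ this]

theorem exists_units_eq_of_forall_pow_eq (hϖ : Irreducible ϖ) {x : K} (hx : x ≠ 0) {m N : ℕ}
    (hm : m ≠ 0) (h : ∀ ℓ : ℕ, ℓ.Prime → N < ℓ → ∃ y : K, y ^ ℓ = x ^ m) :
    ∃ u : Aˣ, x = algebraMap A K u := by
  obtain ⟨k, u, rfl⟩ := exists_units_eq_smul_zpow_of_irreducible (K := K) hϖ hx
  obtain ⟨ℓ, hℓN, hℓ⟩ := Nat.exists_infinite_primes (max N (k * m).natAbs + 1)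
  obtain ⟨y, hy⟩ := h ℓ hℓ (by omega)
  have hy0 : y ≠ 0 := by
    rintro rfl
    exact pow_ne_zero m hx (by rw [← hy, zero_pow hℓ.ne_zero])
  obtain ⟨j, v, rfl⟩ := exists_units_eq_smul_zpow_of_irreducible hϖ hy0
  have hjk : j * ℓ = k * m := by
    refine eq_of_units_smul_zpow_eq (K := K) hϖ (u := v ^ ℓ) (v := u ^ m) ?_
    rw [zpow_mul, zpow_mul, zpow_natCast, zpow_natCast, ← smul_pow, ← smul_pow, hy]
  have hkm : k * m = 0 :=
    Int.eq_zero_of_dvd_of_natAbs_lt_natAbs ⟨j, by rw [← hjk, mul_comm]⟩ (by omega)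
  obtain rfl : k = 0 := by simpa [hm] using hkm
  exact ⟨u, by simp [Units.smul_def, Algebra.smul_def]⟩

theorem symm_apply_mem_range (hϖ : Irreducible ϖ) (φ : K ≃+* K)
    (hφϖ : φ (algebraMap A K ϖ) = algebraMap A K ϖ)
    (hφ : ∀ a : A, φ (algebraMap A K a) ∈ (algebraMap A K).range) (a : A) :
    φ.symm (algebraMap A K a) ∈ (algebraMap A K).range := by
  rcases eq_or_ne a 0 with rfl | ha
  · exact ⟨0, by simp⟩
  -- Otherwise `(φ⁻¹ a)⁻¹ ∈ ϖA` since `A` is a valuation ring, and applying `φ` makes `ϖ` a unit.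
  rcases ValuationRing.isInteger_or_isInteger A (φ.symm (algebraMap A K a)) with hint | ⟨c, hc⟩
  · exact hint
  by_cases hcu : IsUnit c
  · refine ⟨↑hcu.unit⁻¹, ?_⟩
    rw [map_units_inv, IsUnit.unit_spec, hc, inv_inv]
  exfalso
  obtain ⟨d, rfl⟩ : ϖ ∣ c := by
    rw [← Ideal.mem_span_singleton, ← (irreducible_iff_uniformizer ϖ).mp hϖ]
    exact hcu
  obtain ⟨d', hd'⟩ := hφ d
  have hφc := congrArg φ hc
  rw [map_inv₀, RingEquiv.apply_symm_apply, map_mul, map_mul, hφϖ, ← hd', ← map_mul] at hφc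
  have ha0 : algebraMap A K a ≠ 0 := by simpa using ha
  have : algebraMap A K (ϖ * (d' * a)) = algebraMap A K 1 := by
    rw [← mul_assoc, map_mul _ (ϖ * d'), hφc, map_one, inv_mul_cancel₀ ha0]
  exact hϖ.not_isUnit (IsUnit.of_mul_eq_one _ (IsFractionRing.injective A K this))

end IsDiscreteValuationRing

end DiscreteValuationRing

namespace PadicInt

variable {p}

theorem exists_pow_eq_of_norm_sub_one_lt {ℓ : ℕ} (hℓ : p.Coprime ℓ) {s : ℤ_[p]}
    (hs : ‖s - 1‖ < 1) : ∃ z : ℤ_[p], z ^ ℓ = s := by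
  let F : Polynomial ℤ_[p] := Polynomial.X ^ ℓ - Polynomial.C s
  have hF : ‖F.aeval (1 : ℤ_[p])‖ < ‖F.derivative.aeval (1 : ℤ_[p])‖ ^ 2 := by
    simpa [F, Polynomial.derivative_X_pow, norm_sub_rev, norm_natCast_eq_one_iff.mpr hℓ] using hs
  obtain ⟨z, hz, -⟩ := hensels_lemma hF
  exact ⟨z, by simpa [F, sub_eq_zero] using hz⟩

theorem norm_pow_sub_one_sub_one_lt (u : ℤ_[p]ˣ) : ‖(u : ℤ_[p]) ^ (p - 1) - 1‖ < 1 := by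
  rw [← mem_nonunits, ← IsLocalRing.mem_maximalIdeal, ← ker_toZMod, RingHom.mem_ker, map_sub,
    map_pow, map_one, sub_eq_zero]
  exact ZMod.pow_card_sub_one_eq_one (u.isUnit.map toZMod).ne_zero

end PadicInt

section PadicAlgebra

variable {p} {A K : Type*} [CommRing A] [IsDomain A] [IsDiscreteValuationRing A] [Field K]
  [Algebra A K] [IsFractionRing A K] [Algebra ℚ_[p] K]

theorem exists_units_algebraMap_eq (hpA : Irreducible (p : A)) (u : ℤ_[p]ˣ) :
    ∃ w : Aˣ, algebraMap ℚ_[p] K u = algebraMap A K w := by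
  have hp : p.Prime := Fact.out
  refine IsDiscreteValuationRing.exists_units_eq_of_forall_pow_eq hpA (by simp) (m := p - 1)
    (N := p) (by have := hp.two_le; omega) fun ℓ hℓ hpℓ => ?_
  obtain ⟨z, hz⟩ := PadicInt.exists_pow_eq_of_norm_sub_one_lt
    ((Nat.coprime_primes hp hℓ).2 hpℓ.ne) (PadicInt.norm_pow_sub_one_sub_one_lt u)
  exact ⟨algebraMap ℚ_[p] K z, by rw [← map_pow, ← map_pow, ← PadicInt.coe_pow, hz,
    PadicInt.coe_pow]⟩

theorem algebraMap_padicInt_mem_range (hpA : Irreducible (p : A)) (z : ℤ_[p]) :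
    algebraMap ℚ_[p] K z ∈ (algebraMap A K).range := by
  rcases eq_or_ne z 0 with rfl | hz
  · exact ⟨0, by simp⟩
  obtain ⟨w, hw⟩ := exists_units_algebraMap_eq (K := K) hpA (PadicInt.unitCoeff hz)
  refine ⟨w * (p : A) ^ z.valuation, ?_⟩
  have hz' : (z : ℚ_[p]) = (PadicInt.unitCoeff hz : ℤ_[p]) * (p : ℚ_[p]) ^ z.valuation := by
    exact_mod_cast congrArg ((↑) : ℤ_[p] → ℚ_[p]) (PadicInt.unitCoeff_spec hz)
  rw [hz', map_mul, map_mul, map_pow, map_pow, map_natCast, map_natCast]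
  exact congrArg (· * _) hw.symm

theorem algebraMap_mem_range_iff (hpA : Irreducible (p : A)) {q : ℚ_[p]} :
    algebraMap ℚ_[p] K q ∈ (algebraMap A K).range ↔ ‖q‖ ≤ 1 := by
  refine ⟨fun ⟨a, ha⟩ => ?_, fun hq => algebraMap_padicInt_mem_range hpA ⟨q, hq⟩⟩
  by_contra! hq
  have hq0 : q ≠ 0 := by rintro rfl; norm_num at hq
  have hq' : ‖q⁻¹‖ < 1 := by rw [norm_inv]; exact inv_lt_one_of_one_lt₀ hq
  obtain ⟨z, hz⟩ : (p : ℤ_[p]) ∣ ⟨q⁻¹, hq'.le⟩ := (PadicInt.norm_lt_one_iff_dvd _).1 hq'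
  obtain ⟨b, hb⟩ := algebraMap_padicInt_mem_range (K := K) hpA z
  have hqz : q⁻¹ = p * z := congrArg Subtype.val hz
  have : algebraMap A K ((p : A) * (b * a)) = algebraMap A K 1 := by
    rw [map_mul, map_mul, ha, hb, map_natCast, map_one, ← map_natCast (algebraMap ℚ_[p] K),
      ← map_mul, ← map_mul, ← mul_assoc, ← hqz, inv_mul_cancel₀ hq0, map_one]
  exact hpA.not_isUnit (IsUnit.of_mul_eq_one _ (IsFractionRing.injective A K this))

end PadicAlgebra

theorem Padic.norm_le_one_of_sq_norm_le {p : ℕ} [Fact p.Prime] {r : ℚ_[p]} (h : ‖r‖ ^ 2 ≤ p) :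
    ‖r‖ ≤ 1 := by
  have hp : (1 : ℝ) < p := by exact_mod_cast (Fact.out : p.Prime).one_lt
  simpa using (Padic.norm_le_pow_iff_norm_lt_pow_add_one r 0).2 (by
    rw [zero_add, zpow_one]
    nlinarith [norm_nonneg r])

section RamifiedQuadratic

variable {p} {E : Type*} [Field E] [Algebra ℚ_[p] E]

theorem linearIndependent_one_of_apply_eq_neg_s12 (σ : E ≃ₐ[ℚ_[p]] E) {π : E} (hπ : π ≠ 0)
    (hσπ : σ π = -π) : LinearIndependent ℚ_[p] ![1, π] := by
  refine LinearIndependent.pair_iff.2 fun s t hst => ?_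
  have hσst : s • (1 : E) + -(t • π) = 0 := by
    simpa [hσπ] using congrArg σ hst
  have ht : t = 0 := by
    have : (2 * t) • π = 0 := by rw [mul_smul, two_smul]; linear_combination hst - hσst
    simpa [hπ] using this
  subst ht
  simpa using hst

variable [Algebra ℤ_[p] E] [IsScalarTower ℤ_[p] ℚ_[p] E]

theorem norm_le_one_of_isIntegral_algebraMap {q : ℚ_[p]}
    (h : IsIntegral ℤ_[p] (algebraMap ℚ_[p] E q)) : ‖q‖ ≤ 1 := by
  rw [isIntegral_algebraMap_iff (algebraMap ℚ_[p] E).injective] at h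
  obtain ⟨z, rfl⟩ := IsIntegrallyClosed.isIntegral_iff.mp h
  exact z.norm_le_one

theorem exists_eq_add_mul_of_mem_integralClosure (hp2 : p ≠ 2) (σ : E ≃ₐ[ℚ_[p]] E) {π : E}
    (hσπ : σ π = -π) {π₀ : ℚ_[p]} (hπ₀ : algebraMap ℚ_[p] E π₀ = π ^ 2)
    (hπ₀p : ‖π₀‖ = (p : ℝ)⁻¹) (hrank : Module.finrank ℚ_[p] E = 2) {e : E}
    (he : e ∈ integralClosure ℤ_[p] E) :
    ∃ z₁ z₂ : ℤ_[p], e = algebraMap ℚ_[p] E z₁ + algebraMap ℚ_[p] E z₂ * π := by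
  have hp : p.Prime := Fact.out
  have hπ : π ≠ 0 := by
    rintro rfl
    have : π₀ = 0 := by simpa using hπ₀
    rw [this, norm_zero, eq_comm, inv_eq_zero, Nat.cast_eq_zero] at hπ₀p
    exact hp.ne_zero hπ₀p
  obtain ⟨r₀, r₁, hr⟩ : ∃ r₀ r₁ : ℚ_[p], r₀ • (1 : E) + r₁ • π = e := by
    have hspan := (linearIndependent_one_of_apply_eq_neg_s12 σ hπ hσπ).span_eq_top_of_card_eq_finrank
      (by simp [hrank])
    rw [← Submodule.mem_span_pair, ← Matrix.range_cons_cons_empty (u := ![]), hspan]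
    trivial
  simp only [Algebra.smul_def, mul_one] at hr
  subst hr
  have hσe : σ (algebraMap ℚ_[p] E r₀ + algebraMap ℚ_[p] E r₁ * π)
      = algebraMap ℚ_[p] E r₀ - algebraMap ℚ_[p] E r₁ * π := by
    simp [hσπ, sub_eq_add_neg]
  have heσ : IsIntegral ℤ_[p] (σ _) := he.map (σ.toAlgHom.restrictScalars ℤ_[p])
  have hr₀ : ‖r₀‖ ≤ 1 := by
    have h2 : ‖(2 : ℚ_[p])‖ = 1 := by
      exact_mod_cast Padic.norm_natCast_eq_one_iff.2 ((Nat.coprime_primes hp Nat.prime_two).2 hp2)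
    have htr := he.add heσ
    rw [hσe, add_add_sub_cancel, ← two_mul, ← map_ofNat (algebraMap ℚ_[p] E), ← map_mul] at htr
    simpa [norm_mul, h2] using norm_le_one_of_isIntegral_algebraMap htr
  have hr₁ : ‖r₁‖ ≤ 1 := by
    obtain ⟨z₀, rfl⟩ : ∃ z₀ : ℤ_[p], (z₀ : ℚ_[p]) = r₀ := ⟨⟨r₀, hr₀⟩, rfl⟩
    have hsq := (he.sub (isIntegral_algebraMap (R := ℤ_[p]) (A := E) (x := z₀))).pow 2
    rw [IsScalarTower.algebraMap_apply ℤ_[p] ℚ_[p] E, PadicInt.algebraMap_apply,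
      add_sub_cancel_left, mul_pow, ← hπ₀, ← map_pow, ← map_mul] at hsq
    replace hsq := norm_le_one_of_isIntegral_algebraMap hsq
    rw [norm_mul, norm_pow, hπ₀p, ← div_eq_mul_inv, div_le_one (by exact_mod_cast hp.pos)] at hsq
    exact Padic.norm_le_one_of_sq_norm_le hsq
  exact ⟨⟨r₀, hr₀⟩, ⟨r₁, hr₁⟩, rfl⟩

end RamifiedQuadratic

theorem exists_basis_comp_of_basis {F K V N : Type*} [Field F] [Field K] [Algebra F K]
    [AddCommGroup V] [Module F V] [AddCommGroup N] [Module K N] [Module F N]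
    [IsScalarTower F K N] {ι : V →ₗ[F] N} {κ κ' : Type*} [Fintype κ] [Fintype κ']
    {bV : Module.Basis κ F V} {bN : Module.Basis κ K N} (hb : ∀ j, bN j = ι (bV j))
    (B : Module.Basis κ' F V) : ∃ B' : Module.Basis κ' K N, ∀ k, B' k = ι (B k) := by
  have hspan : ⊤ ≤ Submodule.span K (Set.range (ι ∘ B)) := by
    rw [← bN.span_eq, Submodule.span_le]
    rintro _ ⟨j, rfl⟩
    have h := Submodule.mem_map_of_mem (f := ι) (B.mem_span (bV j))
    rw [Submodule.map_span, ← Set.range_comp, ← hb] at h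
    exact Submodule.span_le_restrictScalars F K _ h
  have hcard : Fintype.card κ' = Module.finrank K N := by
    rw [← Module.finrank_eq_card_basis B, Module.finrank_eq_card_basis bV,
      Module.finrank_eq_card_basis bN]
  exact ⟨.mk (linearIndependent_of_top_le_span_of_card_eq_finrank hspan hcard) hspan,
    fun k => by simp⟩

theorem semilinear_mem_span {A K N : Type*} [CommRing A] [Ring K] [Algebra A K]
    [AddCommGroup N] [Module K N] [Module A N] [IsScalarTower A K N] {S : Set N}
    (τ : N →+ N) {φ : K → K} (hτ : ∀ (c : K) (x : N), τ (c • x) = φ c • τ x)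
    (hφ : ∀ a : A, φ (algebraMap A K a) ∈ (algebraMap A K).range) (hS : ∀ x ∈ S, τ x = x)
    {x : N} (hx : x ∈ Submodule.span A S) : τ x ∈ Submodule.span A S := by
  induction hx using Submodule.span_induction with
  | mem y hy => rw [hS y hy]; exact Submodule.subset_span hy
  | zero => simp
  | add y z _ _ hy hz => simpa using Submodule.add_mem _ hy hz
  | smul a y _ hy =>
    obtain ⟨a', ha'⟩ := hφ a
    rw [← algebraMap_smul K, hτ, ← ha', algebraMap_smul]
    exact Submodule.smul_mem _ a' hy

section BaseChange

variable {p} {K A N : Type*} [Field K] [Algebra ℚ_[p] K] [CommRing A] [IsDomain A]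
  [IsDiscreteValuationRing A] [Algebra A K] [IsFractionRing A K]
  [AddCommGroup N] [Module K N] [Module A N] [IsScalarTower A K N] [Module ℚ_[p] N]
  [IsScalarTower ℚ_[p] K N] {C : Type*} [AddCommGroup C] [Module ℚ_[p] C] [Module ℤ_[p] C]
  [IsScalarTower ℤ_[p] ℚ_[p] C] {ι : C →ₗ[ℚ_[p]] N} {κ : Type*} [Fintype κ]
  {bC : Module.Basis κ ℚ_[p] C} {bN : Module.Basis κ K N}

theorem mem_of_mem_span_image (hpA : Irreducible (p : A)) (hb : ∀ j, bN j = ι (bC j))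
    (Λ : Submodule ℤ_[p] C) [Λ.IsLattice ℚ_[p]] {v : C}
    (hv : ι v ∈ Submodule.span A (ι '' Λ)) : v ∈ Λ := by
  let b := Module.Free.chooseBasis ℤ_[p] Λ
  let B := b.extendOfIsLattice ℚ_[p]
  obtain ⟨B', hB'⟩ := exists_basis_comp_of_basis hb B
  have hΛ : Submodule.span A (ι '' Λ) ≤ Submodule.span A (Set.range B') := by
    rw [Submodule.span_le]
    rintro _ ⟨w, hw, rfl⟩
    rw [← Subtype.coe_mk w hw, ← b.sum_repr ⟨w, hw⟩, Submodule.coe_sum, map_sum]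
    refine Submodule.sum_mem _ fun k _ => ?_
    obtain ⟨a, ha⟩ := algebraMap_padicInt_mem_range (K := K) hpA (b.repr ⟨w, hw⟩ k)
    rw [Submodule.coe_smul, ← algebraMap_smul ℚ_[p], map_smul, PadicInt.algebraMap_apply,
      ← algebraMap_smul K, ← ha, algebraMap_smul, ← Module.Basis.extendOfIsLattice_apply ℚ_[p],
      ← hB']
    exact Submodule.smul_mem _ a (Submodule.subset_span ⟨k, rfl⟩)
  have hrepr : ∀ k, B'.repr (ι v) k = algebraMap ℚ_[p] K (B.repr v k) := by
    have hv : ι v = ∑ k, algebraMap ℚ_[p] K (B.repr v k) • B' k := by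
      conv_lhs => rw [← B.sum_repr v]
      simp only [map_sum, map_smul, hB', algebraMap_smul]
    intro k
    rw [hv, B'.repr_sum_self]
  rw [← B.sum_repr v]
  refine Submodule.sum_mem _ fun k _ => ?_
  have hk := (B'.mem_span_iff_repr_mem A (ι v)).1 (hΛ hv) k
  rw [hrepr] at hk
  obtain ⟨z, hz⟩ : ∃ z : ℤ_[p], (z : ℚ_[p]) = B.repr v k :=
    ⟨⟨_, (algebraMap_mem_range_iff hpA).1 hk⟩, rfl⟩
  rw [← hz, ← PadicInt.algebraMap_apply, algebraMap_smul, Module.Basis.extendOfIsLattice_apply]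
  exact Λ.smul_mem z (b k).2

theorem span_image_inf (hpA : Irreducible (p : A)) (hb : ∀ j, bN j = ι (bC j))
    (σK : K ≃ₐ[ℚ_[p]] K) (hσA : ∀ a : A, σK (algebraMap A K a) ∈ (algebraMap A K).range)
    (τ : N ≃+ N) (hτσ : ∀ (c : K) (x : N), τ (c • x) = σK c • τ x)
    (hτι : ∀ v : C, τ (ι v) = ι v)
    (hdesc : ∀ T : Submodule A N, Submodule.span A (τ '' (T : Set N)) = T →
      Submodule.span A (ι '' {v : C | ι v ∈ T}) = T)
    (Λ₁ Λ₂ : Submodule ℤ_[p] C) [Λ₁.IsLattice ℚ_[p]] [Λ₂.IsLattice ℚ_[p]] :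
    Submodule.span A (ι '' ↑(Λ₁ ⊓ Λ₂)) =
      Submodule.span A (ι '' Λ₁) ⊓ Submodule.span A (ι '' Λ₂) := by
  refine le_antisymm (le_inf (Submodule.span_mono (Set.image_mono inf_le_left))
    (Submodule.span_mono (Set.image_mono inf_le_right))) ?_
  have hσA' : ∀ a : A, σK.symm (algebraMap A K a) ∈ (algebraMap A K).range :=
    IsDiscreteValuationRing.symm_apply_mem_range hpA σK.toRingEquiv (by simp) hσA
  have hτσ' : ∀ (c : K) (x : N), τ.symm (c • x) = σK.symm c • τ.symm x := fun c x =>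
    τ.symm_apply_eq.2 (by rw [hτσ, σK.apply_symm_apply, τ.apply_symm_apply])
  have hstable : ∀ (s : Set C), ∀ x ∈ Submodule.span A (ι '' s),
      τ x ∈ Submodule.span A (ι '' s) ∧ τ.symm x ∈ Submodule.span A (ι '' s) := by
    rintro s x hx
    refine ⟨semilinear_mem_span τ.toAddMonoidHom hτσ hσA ?_ hx,
      semilinear_mem_span τ.symm.toAddMonoidHom hτσ' hσA' ?_ hx⟩
    all_goals rintro _ ⟨v, -, rfl⟩
    · exact hτι v
    · exact τ.symm_apply_eq.2 (hτι v).symm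
  set T := Submodule.span A (ι '' Λ₁) ⊓ Submodule.span A (ι '' Λ₂)
  have hT : Submodule.span A (τ '' (T : Set N)) = T := by
    refine le_antisymm (Submodule.span_le.2 ?_) fun x hx => Submodule.subset_span
      ⟨τ.symm x, ⟨(hstable _ x hx.1).2, (hstable _ x hx.2).2⟩, τ.apply_symm_apply x⟩
    rintro _ ⟨x, hx, rfl⟩
    exact ⟨(hstable _ x hx.1).1, (hstable _ x hx.2).1⟩
  rw [← hdesc T hT]
  exact Submodule.span_mono (Set.image_mono fun v hv =>
    ⟨mem_of_mem_span_image hpA hb Λ₁ hv.1, mem_of_mem_span_image hpA hb Λ₂ hv.2⟩)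

end BaseChange

section VertexLattice

variable {p}

theorem IsOLattice.inf {E C : Type} [Field E] [AddCommGroup C] [Module E C] [Module ℚ_[p] C]
    [Module ℤ_[p] C] [IsScalarTower ℤ_[p] ℚ_[p] C] [Module.Finite ℚ_[p] C] {π : E}
    {Λ₁ Λ₂ : Submodule ℤ_[p] C} (h₁ : IsOLattice p π Λ₁) (h₂ : IsOLattice p π Λ₂) :
    IsOLattice p π (Λ₁ ⊓ Λ₂) :=
  have : Λ₁.IsLattice ℚ_[p] := ⟨h₁.1, h₁.2.1⟩
  have : Λ₂.IsLattice ℚ_[p] := ⟨h₂.1, h₂.2.1⟩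
  ⟨Submodule.IsLattice.fg, Submodule.IsLattice.span_eq_top,
    fun x hx => ⟨h₁.2.2 x hx.1, h₂.2.2 x hx.2⟩⟩

variable {E : Type} [Field E] [Algebra ℤ_[p] E] {C : Type} [AddCommGroup C] [Module ℤ_[p] C]

theorem sharpSet_anti {h : C → C → E} {Λ Λ' : Submodule ℤ_[p] C} (hΛ : Λ ≤ Λ') :
    sharpSet p h Λ' ⊆ sharpSet p h Λ :=
  fun _ hx y hy => hx y (hΛ hy)

variable [Algebra ℚ_[p] E] [Module ℚ_[p] C] {K A N L : Type*} [Field K] [Algebra ℚ_[p] K]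
  [CommRing A] [IsDomain A] [IsDiscreteValuationRing A] [Algebra A K] [IsFractionRing A K]
  [AddCommGroup N] [Module K N] [Module A N] [IsScalarTower A K N] [Module ℚ_[p] N]
  [CommRing L] [Algebra K L] [Algebra E L] [Algebra ℚ_[p] L] [IsScalarTower ℚ_[p] K L]
  [IsScalarTower ℚ_[p] E L]

theorem apply_mem_of_mem_sharpSet (hpA : Irreducible (p : A)) {π : E}
    (hOE : ∀ e ∈ integralClosure ℤ_[p] E,
      ∃ z₁ z₂ : ℤ_[p], e = algebraMap ℚ_[p] E z₁ + algebraMap ℚ_[p] E z₂ * π)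
    {h : C → C → E} {ι : C →ₗ[ℚ_[p]] N} {Pn : N →ₗ[K] N} {BN : LinearMap.BilinForm K N}
    {HN : N → N → L} (hHι : ∀ v w : C, HN (ι v) (ι w) = algebraMap E L (h v w))
    (hHN : ∀ x y : N, HN x y
      = algebraMap K L (BN (Pn x) y) + algebraMap K L (BN x y) * algebraMap E L π)
    {Λ : Submodule ℤ_[p] C} {M : Submodule A N}
    (hM : (M : Set N) = {x | ∀ y ∈ M, ∃ a b : A, HN x y
        = algebraMap K L (algebraMap A K a)
          + algebraMap K L (algebraMap A K b) * algebraMap E L π})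
    (hMΛ : M ≤ Submodule.span A (ι '' Λ)) {x : C} (hx : x ∈ sharpSet p h Λ) : ι x ∈ M := by
  rw [← SetLike.mem_coe, hM]
  intro y hy
  have hyΛ := hMΛ hy
  clear hy
  induction hyΛ using Submodule.span_induction with
  | mem _ hw =>
    obtain ⟨w, hw, rfl⟩ := hw
    obtain ⟨z₁, z₂, hz⟩ := hOE _ (hx w hw)
    obtain ⟨a₁, ha₁⟩ := algebraMap_padicInt_mem_range (K := K) hpA z₁
    obtain ⟨a₂, ha₂⟩ := algebraMap_padicInt_mem_range (K := K) hpA z₂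
    refine ⟨a₁, a₂, ?_⟩
    rw [hHι, hz, map_add, map_mul, ha₁, ha₂, ← IsScalarTower.algebraMap_apply,
      ← IsScalarTower.algebraMap_apply, ← IsScalarTower.algebraMap_apply,
      ← IsScalarTower.algebraMap_apply]
  | zero => exact ⟨0, 0, by simp [hHN]⟩
  | add y z _ _ hy hz =>
    obtain ⟨a, b, hab⟩ := hy
    obtain ⟨a', b', hab'⟩ := hz
    refine ⟨a + a', b + b', ?_⟩
    simp only [hHN, map_add] at hab hab' ⊢
    linear_combination hab + hab'
  | smul c y _ hy =>
    obtain ⟨a, b, hab⟩ := hy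
    refine ⟨c * a, c * b, ?_⟩
    rw [← algebraMap_smul K]
    simp only [hHN, map_smul, smul_eq_mul, map_mul] at hab ⊢
    linear_combination algebraMap K L (algebraMap A K c) * hab

end VertexLattice

theorem statement12
    (hp2 : p ≠ 2)
    (σ : E ≃ₐ[ℚ_[p]] E) (π : E) (hσπ : σ π = -π)
    (hπ : ∃ π₀ : ℚ_[p], algebraMap ℚ_[p] E π₀ = π ^ 2 ∧ ‖π₀‖ = (p : ℝ)⁻¹)
    (hrank : Module.finrank ℚ_[p] E = 2)
    (n : ℕ)
    (h : C → C → E)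
    -- W and W_ℚ with Frobenius σK preserving W, with fixed field ℚ_p
    (K : Type) [Field K] [Algebra ℚ_[p] K]
    (A : Type) [CommRing A] [IsDomain A] [Algebra A K] [IsFractionRing A K]
    [IsDiscreteValuationRing A]
    (hpA : Irreducible (p : A))
    (σK : K ≃ₐ[ℚ_[p]] K)
    (hσA : ∀ a : A, ∃ a' : A, σK (algebraMap A K a) = algebraMap A K a')
    -- N = C ⊗_{ℚ_p} W_ℚ
    (N : Type) [AddCommGroup N] [Module K N] [Module A N] [IsScalarTower A K N]
    [Module ℚ_[p] N] [IsScalarTower ℚ_[p] K N]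
    (ι : C →ₗ[ℚ_[p]] N)
    (bC : Module.Basis (Fin (2 * n)) ℚ_[p] C) (bN : Module.Basis (Fin (2 * n)) K N)
    (hb : ∀ j, bN j = ι (bC j))
    -- τ = id_C ⊗ σK; its fixed points are exactly ι(C)
    (τ : N ≃+ N) (hτsl : ∀ (c : K) (x : N), τ (c • x) = σK c • τ x)
    (hτι : ∀ v : C, τ (ι v) = ι v)
    -- Frobenius descent: a τ-stable W-lattice is spanned by its τ-invariants
    (hdesc : ∀ T : Submodule A N, Submodule.span A (τ '' (T : Set N)) = T →
      Submodule.span A (ι '' {v : C | ι v ∈ T}) = T)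
    -- the action Π of π on N
    (Pn : N →ₗ[K] N)
    -- the bilinear extension BN of ⟨·,·⟩
    (BN : LinearMap.BilinForm K N)
    -- Ĕ = W_ℚ ⊗_{ℚ_p} E and the hermitian extension HN of h
    (L : Type) [CommRing L] [Algebra K L] [Algebra E L]
    [Algebra ℚ_[p] L] [IsScalarTower ℚ_[p] K L] [IsScalarTower ℚ_[p] E L]
    (HN : N → N → L)
    (hHι : ∀ v w : C, HN (ι v) (ι w) = algebraMap E L (h v w))
    (hHN : ∀ x y : N, HN x y
      = algebraMap K L (BN (Pn x) y) + algebraMap K L (BN x y) * algebraMap E L π)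
    -- the set 𝒱(𝔽) of selfdual 𝒪_Ĕ-lattices M with Πτ(M) ⊆ M ⊆ Π⁻¹τ(M)
    -- and length((M+τM)/M) ≤ 1
    (VF : Set (Submodule A N))
    (hVF : VF = {M : Submodule A N | M.FG ∧ Submodule.span K (M : Set N) = ⊤ ∧
      (M : Set N) = {x | ∀ y ∈ M, ∃ a b : A, HN x y
        = algebraMap K L (algebraMap A K a)
          + algebraMap K L (algebraMap A K b) * algebraMap E L π} ∧
      (∀ x ∈ M, Pn (τ x) ∈ M) ∧
      (∀ x ∈ M, ∃ y ∈ M, Pn x = τ y) ∧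
      (M = M ⊔ Submodule.span A (τ '' (M : Set N)) ∨
        M ⋖ M ⊔ Submodule.span A (τ '' (M : Set N)))})
    -- the strata 𝒱_Λ(𝔽) = {M ∈ 𝒱(𝔽) : M ⊆ Λ ⊗_{𝒪_E} 𝒪_Ĕ}
    (VL : Submodule ℤ_[p] C → Set (Submodule A N))
    (hVL : ∀ Λ : Submodule ℤ_[p] C,
      VL Λ = {M ∈ VF | M ≤ Submodule.span A (ι '' (Λ : Set C))})
    -- Λ₁, Λ₂ vertex lattices
    (Λ₁ Λ₂ : Submodule ℤ_[p] C)
    (h₁ : IsVertexLattice p π h Λ₁) (h₂ : IsVertexLattice p π h Λ₂) :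
    (IsVertexLattice p π h (Λ₁ ⊓ Λ₂) → VL (Λ₁ ⊓ Λ₂) = VL Λ₁ ∩ VL Λ₂) ∧
    (¬ IsVertexLattice p π h (Λ₁ ⊓ Λ₂) → VL Λ₁ ∩ VL Λ₂ = ∅) := by
  have : Module.Finite ℚ_[p] C := Module.Finite.of_basis bC
  have hlat : ∀ {Λ}, IsVertexLattice p π h Λ → Λ.IsLattice ℚ_[p] := fun hΛ => ⟨hΛ.1.1, hΛ.1.2.1⟩
  have := hlat h₁
  have := hlat h₂
  have hVL_inf : VL (Λ₁ ⊓ Λ₂) = VL Λ₁ ∩ VL Λ₂ := by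
    rw [hVL, hVL, hVL, span_image_inf hpA hb σK (fun a => (hσA a).imp fun _ h => h.symm) τ hτsl
      hτι hdesc]
    ext M
    simp only [Set.mem_ofPred_eq, Set.mem_inter_iff, le_inf_iff]
    tauto
  refine ⟨fun _ => hVL_inf, fun hnv => Set.eq_empty_of_forall_notMem fun M hM => hnv ?_⟩
  rw [← hVL_inf, hVL, hVF] at hM
  obtain ⟨⟨-, -, hMdual, -⟩, hMΛ⟩ := hM
  obtain ⟨π₀, hπ₀, hπ₀p⟩ := hπ
  have hOE := fun e he =>
    exists_eq_add_mul_of_mem_integralClosure hp2 σ hσπ hπ₀ hπ₀p hrank (e := e) he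
  refine ⟨h₁.1.inf h₂.1, fun x hx => sharpSet_anti inf_le_left (h₁.2.1 x hx.1), fun x hx => ?_⟩
  exact mem_of_mem_span_image hpA hb _
    (hMΛ (apply_mem_of_mem_sharpSet hpA hOE hHι hHN hMdual hMΛ hx))
end

section
/- Let Λ be a vertex lattice in C, let k be an algebraically closed field of characteristic p containing 𝔽, and let M ⊆ Λ_k be a W(k)-lattice with M^∨ ⊆ M. Then M and M^∨ are each stable under Π, under Π∘τ_k, and under τ_k^{-1}∘Π (the latter two being, up to units of W(k), the Frobenius F and the Verschiebung V of the corresponding Dieudonné module). -/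
/-!
Since `πΛ ⊆ Λ^♯`, the pairing `⟨Πx, y⟩` is integral on `Λ_k`: on generators it is
`2⁻¹ Tr(π⁻¹ h(πv, w))`, and `2⁻¹ Tr(π⁻¹ a) ∈ ℤ_p` for every `a ∈ 𝒪_E` because
`a - σ a = Tr(π⁻¹ a) π` has square `Tr(π⁻¹ a)² π₀` in `ℤ_p`. As `τ_k` preserves `Λ_k` and is
`σ`-semilinear for the pairing against `Λ`, the same holds for `Π τ_k` and `τ_k⁻¹ Π`. Hence each
of the three maps sends `Λ_k` into `Λ_k^∨ ⊆ M^∨ ⊆ M ⊆ Λ_k`.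

The ring `W(k)` is modelled by an abstract discrete valuation ring `A` in which `p` is a
uniformizer, so `ℤ_p ⊆ A` has to be proved: for `u ∈ ℤ_p` the element `1 + p u²` is a square,
which is impossible in `Frac A` if `u ∉ A`, as `p u²` would then have odd negative valuation.
-/

open Set Submodule

namespace Padic

variable {p : ℕ} [Fact p.Prime]

lemma norm_two_eq_one_s13 (hp2 : p ≠ 2) : ‖(2 : ℚ_[p])‖ = 1 := by
  have hcop : p.Coprime 2 := (Nat.coprime_primes Fact.out Nat.prime_two).mpr hp2
  exact_mod_cast norm_natCast_eq_one_iff.mpr hcop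

lemma norm_le_one_of_norm_sq_mul_le_one {π₀ x : ℚ_[p]} (hπ₀ : ‖π₀‖ = (p : ℝ)⁻¹)
    (h : ‖x ^ 2 * π₀‖ ≤ 1) : ‖x‖ ≤ 1 := by
  have hp : (1 : ℝ) < p := mod_cast (Fact.out : p.Prime).one_lt
  rw [norm_mul, norm_pow, hπ₀, ← div_eq_mul_inv, div_le_one (by positivity)] at h
  have hlt : ‖x‖ < (p : ℝ) ^ ((0 : ℤ) + 1) := by
    rw [zero_add, zpow_one]
    nlinarith [norm_nonneg x]
  simpa using (norm_le_pow_iff_norm_lt_pow_add_one x 0).mpr hlt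

lemma norm_le_one_of_isIntegral {E : Type*} [CommRing E] [Nontrivial E] [Algebra ℚ_[p] E]
    [Algebra ℤ_[p] E] [IsScalarTower ℤ_[p] ℚ_[p] E] {x : ℚ_[p]}
    (hx : IsIntegral ℤ_[p] (algebraMap ℚ_[p] E x)) : ‖x‖ ≤ 1 := by
  obtain ⟨z, rfl⟩ := IsIntegrallyClosed.isIntegral_iff.mp
    (IsIntegral.tower_bot (algebraMap ℚ_[p] E).injective hx)
  exact z.norm_le_one

end Padic

namespace PadicInt

variable {p : ℕ} [Fact p.Prime]

lemma exists_sq_eq_of_norm_sub_one_lt (hp2 : p ≠ 2) {c : ℤ_[p]} (hc : ‖c - 1‖ < 1) :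
    ∃ z : ℤ_[p], z ^ 2 = c := by
  open Polynomial in
  have hnorm : ‖(X ^ 2 - C c).eval 1‖ < ‖(derivative (X ^ 2 - C c)).eval 1‖ ^ 2 := by
    have h2 : ‖(2 : ℤ_[p])‖ = 1 := by
      rw [norm_def]; exact_mod_cast Padic.norm_two_eq_one_s13 hp2
    simpa [← norm_neg (1 - c), one_add_one_eq_two, h2] using hc
  obtain ⟨z, hz, -⟩ := hensels_lemma hnorm
  exact ⟨z, sub_eq_zero.mp (by simpa using hz)⟩

lemma exists_sq_eq_one_add_p_mul_sq (hp2 : p ≠ 2) (u : ℤ_[p]) :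
    ∃ z : ℤ_[p], z ^ 2 = 1 + p * u ^ 2 := by
  refine exists_sq_eq_of_norm_sub_one_lt hp2 ?_
  rw [add_sub_cancel_left, norm_mul, norm_p]
  calc (p : ℝ)⁻¹ * ‖u ^ 2‖ ≤ (p : ℝ)⁻¹ := mul_le_of_le_one_right (by positivity) (u ^ 2).norm_le_one
    _ < 1 := inv_lt_one_of_one_lt₀ (mod_cast (Fact.out : p.Prime).one_lt)

end PadicInt

namespace IsDiscreteValuationRing

variable {A K : Type*} [CommRing A] [IsDomain A] [IsDiscreteValuationRing A] [Field K]
  [Algebra A K] [IsFractionRing A K]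

lemma exists_inv_eq_mul_of_notMem_one {ϖ : A} (hϖ : Irreducible ϖ) {x : K}
    (hx : x ∉ (1 : Submodule A K)) : ∃ c : A, algebraMap A K (ϖ * c) = x⁻¹ := by
  obtain ⟨b, hb⟩ := (ValuationRing.isInteger_or_isInteger A x).resolve_left
    (fun h ↦ hx (Submodule.mem_one.mpr h))
  have hb_nonunit : ¬ IsUnit b := by
    rintro ⟨w, rfl⟩
    refine hx (Submodule.mem_one.mpr ⟨↑w⁻¹, ?_⟩)
    rw [map_units_inv, hb, inv_inv]
  rw [← mem_nonunits_iff, ← IsLocalRing.mem_maximalIdeal, hϖ.maximalIdeal_eq,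
    Ideal.mem_span_singleton] at hb_nonunit
  obtain ⟨c, rfl⟩ := hb_nonunit
  exact ⟨c, hb⟩

lemma mem_one_of_sq_eq_one_add_mul_sq {ϖ : A} (hϖ : Irreducible ϖ) {x y : K}
    (hxy : y ^ 2 = 1 + algebraMap A K ϖ * x ^ 2) : x ∈ (1 : Submodule A K) := by
  by_contra hx
  obtain ⟨c, hc⟩ := exists_inv_eq_mul_of_notMem_one hϖ hx
  have hx0 : x ≠ 0 := fun h ↦ hx (h ▸ zero_mem _)
  have hsq : (algebraMap A K (ϖ * c) * y) ^ 2 = algebraMap A K ((ϖ * c) ^ 2 + ϖ) := by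
    rw [mul_pow, hxy, hc, map_add, map_pow, hc]
    field_simp
  have hint : IsIntegral A (algebraMap A K (ϖ * c) * y) :=
    ⟨Polynomial.X ^ 2 - Polynomial.C ((ϖ * c) ^ 2 + ϖ),
      Polynomial.monic_X_pow_sub_C _ two_ne_zero, by
        rw [Polynomial.eval₂_sub, Polynomial.eval₂_X_pow, Polynomial.eval₂_C, hsq, sub_self]⟩
  obtain ⟨s, hs⟩ := IsIntegrallyClosed.isIntegral_iff.mp hint
  have hs2 : s ^ 2 = ϖ * (ϖ * c ^ 2 + 1) :=
    IsFractionRing.injective A K (by rw [map_pow, hs, hsq]; ring_nf)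
  obtain ⟨t, rfl⟩ := hϖ.prime.dvd_of_dvd_pow (Dvd.intro _ hs2.symm)
  have ht : ϖ * t ^ 2 = ϖ * c ^ 2 + 1 :=
    mul_left_cancel₀ hϖ.ne_zero (by rw [← hs2]; ring)
  exact hϖ.not_isUnit (isUnit_of_dvd_one ⟨t ^ 2 - c ^ 2, by rw [mul_sub, ht]; ring⟩)

lemma symm_mem_one_of_mem_one {p : ℕ} (hpA : Irreducible (p : A)) (σ : K ≃+* K)
    (hσ : ∀ x ∈ (1 : Submodule A K), σ x ∈ (1 : Submodule A K)) {x : K}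
    (hx : x ∈ (1 : Submodule A K)) : σ.symm x ∈ (1 : Submodule A K) := by
  by_contra hy
  obtain ⟨c, hc⟩ := exists_inv_eq_mul_of_notMem_one hpA hy
  obtain ⟨c', hc'⟩ := Submodule.mem_one.mp (hσ _ (Submodule.mem_one.mpr ⟨c, rfl⟩))
  obtain ⟨a, rfl⟩ := Submodule.mem_one.mp hx
  have hx0 : algebraMap A K a ≠ 0 := fun h ↦ hy (by rw [h, map_zero]; exact zero_mem _)
  -- `σ` fixes `p`, so applying it to `(σ⁻¹ x)⁻¹ = p c` shows that `p` divides `x⁻¹` in `A`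
  have hinv : algebraMap A K (p * c') = (algebraMap A K a)⁻¹ := by
    rw [← RingEquiv.apply_symm_apply σ (algebraMap A K a), ← map_inv₀, ← hc, map_mul,
      map_mul, map_natCast, map_mul, map_natCast, hc']
  have hunit : a * (p * c') = 1 :=
    IsFractionRing.injective A K (by rw [map_mul, hinv, mul_inv_cancel₀ hx0, map_one])
  exact hpA.not_isUnit (isUnit_of_dvd_one ⟨c' * a, by rw [← hunit]; ring⟩)

end IsDiscreteValuationRing

lemma algebraMap_padicInt_mem_one {p : ℕ} [Fact p.Prime] (hp2 : p ≠ 2) {A K : Type*}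
    [CommRing A] [IsDomain A] [IsDiscreteValuationRing A] [Field K] [Algebra A K]
    [IsFractionRing A K] [Algebra ℚ_[p] K] (hpA : Irreducible (p : A)) (u : ℤ_[p]) :
    algebraMap ℚ_[p] K u ∈ (1 : Submodule A K) := by
  obtain ⟨z, hz⟩ := PadicInt.exists_sq_eq_one_add_p_mul_sq hp2 u
  refine IsDiscreteValuationRing.mem_one_of_sq_eq_one_add_mul_sq hpA
    (y := algebraMap ℚ_[p] K z) ?_
  rw [map_natCast, ← map_natCast (algebraMap ℚ_[p] K), ← map_pow, ← map_pow, ← map_mul,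
    ← map_one (algebraMap ℚ_[p] K), ← map_add]
  exact congrArg _ (by exact_mod_cast congrArg ((↑) : ℤ_[p] → ℚ_[p]) hz)

section QuadraticExtension

variable {F E : Type*} [Field F] [CharZero F] [Field E] [Algebra F E] [FiniteDimensional F E]

lemma exists_algebraMap_add_smul_eq (hrank : Module.finrank F E = 2) (σ : E ≃ₐ[F] E) {π : E}
    (hπ : π ≠ 0) (hσπ : σ π = -π) (x : E) : ∃ c d : F, algebraMap F E c + d • π = x := by
  have hπF : ∀ c : F, c • (1 : E) ≠ π := by
    intro c hc
    rw [← Algebra.algebraMap_eq_smul_one] at hc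
    have hneg : algebraMap F E c = algebraMap F E (-c) := by
      rw [map_neg, hc, ← hσπ, ← hc, AlgEquiv.commutes]
    rw [(algebraMap F E).injective.eq_iff, CharZero.eq_neg_self_iff] at hneg
    exact hπ (by rw [← hc, hneg, map_zero])
  have hli : LinearIndependent F ![(1 : E), π] :=
    (LinearIndependent.pair_iff' one_ne_zero).mpr hπF
  have hx : x ∈ Submodule.span F (Set.range ![(1 : E), π]) := by
    rw [hli.span_eq_top_of_card_eq_finrank' (by simp [hrank])]
    exact Submodule.mem_top
  rw [Matrix.range_cons_cons_empty, Submodule.mem_span_pair] at hx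
  obtain ⟨c, d, hcd⟩ := hx
  exact ⟨c, d, by rw [Algebra.algebraMap_eq_smul_one, hcd]⟩

lemma sub_algEquiv_apply_eq_trace_smul (hrank : Module.finrank F E = 2) (σ : E ≃ₐ[F] E)
    {π : E} (hπ : π ≠ 0) (hσπ : σ π = -π) (a : E) :
    a - σ a = Algebra.trace F E (π⁻¹ * a) • π := by
  obtain ⟨c, d, hcd⟩ := exists_algebraMap_add_smul_eq hrank σ hπ hσπ (π⁻¹ * a)
  have htrπ : Algebra.trace F E π = 0 := by
    have h := Algebra.trace_eq_of_algEquiv σ π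
    rwa [hσπ, map_neg, neg_eq_iff_add_eq_zero, ← two_mul, mul_eq_zero,
      or_iff_right two_ne_zero] at h
  have ha : a = c • π + d • π ^ 2 := by
    rw [← mul_inv_cancel_left₀ hπ a, ← hcd, mul_add, ← Algebra.commutes, mul_smul_comm, ← sq,
      ← Algebra.smul_def]
  rw [← hcd, map_add, Algebra.trace_algebraMap, map_smul, htrπ, hrank, ha, map_add,
    map_smul, map_smul, map_pow, hσπ, neg_sq]
  module

end QuadraticExtension

lemma norm_two_inv_mul_trace_inv_mul_le_one {p : ℕ} [Fact p.Prime] (hp2 : p ≠ 2) {E : Type*}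
    [Field E] [Algebra ℚ_[p] E] [Algebra ℤ_[p] E] [IsScalarTower ℤ_[p] ℚ_[p] E]
    [FiniteDimensional ℚ_[p] E] (hrank : Module.finrank ℚ_[p] E = 2) (σ : E ≃ₐ[ℚ_[p]] E)
    {π : E} (hσπ : σ π = -π) {π₀ : ℚ_[p]} (hπ₀ : algebraMap ℚ_[p] E π₀ = π ^ 2)
    (hπ₀norm : ‖π₀‖ = (p : ℝ)⁻¹) {a : E} (ha : a ∈ integralClosure ℤ_[p] E) :
    ‖2⁻¹ * Algebra.trace ℚ_[p] E (π⁻¹ * a)‖ ≤ 1 := by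
  have hπ : π ≠ 0 := by
    rintro rfl
    rw [zero_pow two_ne_zero, map_eq_zero] at hπ₀
    simp only [hπ₀, norm_zero, zero_eq_inv] at hπ₀norm
    exact (Fact.out : p.Prime).ne_zero (mod_cast hπ₀norm.symm)
  set t := Algebra.trace ℚ_[p] E (π⁻¹ * a)
  have hsq : algebraMap ℚ_[p] E (t ^ 2 * π₀) = (a - σ a) ^ 2 := by
    rw [sub_algEquiv_apply_eq_trace_smul hrank σ hπ hσπ a, smul_pow, Algebra.smul_def, map_mul,
      map_pow, hπ₀]
  have hint : IsIntegral ℤ_[p] (algebraMap ℚ_[p] E (t ^ 2 * π₀)) :=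
    hsq ▸ (ha.sub (ha.map (σ.toAlgHom.restrictScalars ℤ_[p]))).pow 2
  have ht : ‖t‖ ≤ 1 :=
    Padic.norm_le_one_of_norm_sq_mul_le_one hπ₀norm (Padic.norm_le_one_of_isIntegral hint)
  rwa [norm_mul, norm_inv, Padic.norm_two_eq_one_s13 hp2, inv_one, one_mul]

namespace LinearMap.BilinForm

variable {A K N : Type*} [CommRing A] [Field K] [Algebra A K] [AddCommGroup N] [Module K N]
  [Module A N] [IsScalarTower A K N] (B : LinearMap.BilinForm K N)

lemma mem_dualSubmodule_span_iff {T : Set N} {x : N} :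
    x ∈ B.dualSubmodule (span A T) ↔ ∀ y ∈ T, B x y ∈ (1 : Submodule A K) :=
  ⟨fun hx y hy ↦ hx y (subset_span hy), fun hx _ hy ↦
    span_le (p := (1 : Submodule A K).comap ((B x).restrictScalars A)) |>.mpr hx hy⟩

lemma mapsTo_span_dualSubmodule_span {f : N →ₗ[K] N} {S T : Set N}
    (h : ∀ x ∈ S, ∀ y ∈ T, B (f x) y ∈ (1 : Submodule A K)) :
    MapsTo f (span A S) (B.dualSubmodule (span A T)) := fun _ hx ↦
  span_le (p := (B.dualSubmodule (span A T)).comap (f.restrictScalars A)) |>.mpr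
    (fun x hx ↦ (B.mem_dualSubmodule_span_iff).mpr (h x hx)) hx

lemma mapsTo_of_mapsTo_dualSubmodule {M L : Submodule A N} (hML : M ≤ L)
    (hM : B.dualSubmodule M ≤ M) {f : N → N} (hf : MapsTo f L (B.dualSubmodule L)) :
    MapsTo f M M ∧ MapsTo f (B.dualSubmodule M) (B.dualSubmodule M) := by
  have hLM : B.dualSubmodule L ≤ B.dualSubmodule M := fun x hx y hy ↦ hx y (hML hy)
  exact ⟨fun x hx ↦ hM (hLM (hf (hML hx))), fun x hx ↦ hLM (hf (hML (hM hx)))⟩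

lemma apply_semilinear_left {ι : Type*} [Fintype ι] (b : Module.Basis ι K N) (σ : K →+* K)
    (τ : N →+ N) (hτ : ∀ (c : K) x, τ (c • x) = σ c • τ x) (hb : ∀ j, τ (b j) = b j)
    {y : N} (hy : ∀ j, σ (B (b j) y) = B (b j) y) (x : N) : B (τ x) y = σ (B x y) := by
  conv_lhs => rw [← b.sum_repr x]
  conv_rhs => rw [← b.sum_repr x]
  simp only [map_sum, hτ, hb, map_smul, LinearMap.sum_apply, LinearMap.smul_apply, smul_eq_mul,
    map_mul, hy]

lemma symm_mem_dualSubmodule_span (σ : K ≃+* K)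
    (hσ : ∀ x ∈ (1 : Submodule A K), σ.symm x ∈ (1 : Submodule A K)) (τ : N ≃+ N) {T : Set N}
    (hτ : ∀ x, ∀ y ∈ T, B (τ x) y = σ (B x y)) {x : N}
    (hx : x ∈ B.dualSubmodule (span A T)) : τ.symm x ∈ B.dualSubmodule (span A T) := by
  rw [mem_dualSubmodule_span_iff] at hx ⊢
  intro y hy
  have h := hτ (τ.symm x) y hy
  rw [τ.apply_symm_apply, ← σ.symm_apply_eq] at h
  exact h ▸ hσ _ (hx y hy)

end LinearMap.BilinForm

lemma mapsTo_span_of_semilinear {A K N : Type*} [CommRing A] [Field K] [Algebra A K]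
    [AddCommGroup N] [Module K N] [Module A N] [IsScalarTower A K N] {σ : K →+* K}
    (hσ : ∀ x ∈ (1 : Submodule A K), σ x ∈ (1 : Submodule A K))
    (τ : N →+ N) (hτ : ∀ (c : K) x, τ (c • x) = σ c • τ x) {S : Set N}
    (hS : ∀ x ∈ S, τ x = x) : MapsTo τ (span A S) (span A S) := by
  intro x hx
  induction hx using span_induction with
  | mem x hx => rw [hS x hx]; exact subset_span hx
  | zero => simp
  | add x y _ _ hx hy => simpa using add_mem hx hy
  | smul a x _ hx =>
    obtain ⟨a', ha'⟩ := Submodule.mem_one.mp (hσ _ (Submodule.mem_one.mpr ⟨a, rfl⟩))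
    rw [← algebraMap_smul K a x, hτ, ← ha', algebraMap_smul]
    exact smul_mem _ _ hx

theorem statement13_general
    (p : ℕ) [Fact p.Prime] (hp2 : p ≠ 2)
    (E : Type) [Field E] [Algebra ℚ_[p] E] [Algebra ℤ_[p] E] [IsScalarTower ℤ_[p] ℚ_[p] E]
    [FiniteDimensional ℚ_[p] E]
    (σ : E ≃ₐ[ℚ_[p]] E) (π : E) (hσπ : σ π = -π)
    (hπ : ∃ π₀ : ℚ_[p], algebraMap ℚ_[p] E π₀ = π ^ 2 ∧ ‖π₀‖ = (p : ℝ)⁻¹)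
    (hrank : Module.finrank ℚ_[p] E = 2)
    (C : Type) [AddCommGroup C] [Module E C] [Module ℚ_[p] C] [Module ℤ_[p] C]
    (n : ℕ)
    (h : C → C → E)
    -- Λ is a vertex lattice: an 𝒪_E-lattice with πΛ ⊆ Λ^♯ ⊆ Λ,
    -- where Λ^♯ = {x | ∀ y ∈ Λ, h x y ∈ 𝒪_E}
    (Λ : Submodule ℤ_[p] C)
    (hΛ1 : ∀ x ∈ Λ, ∀ y ∈ Λ, h (π • x) y ∈ integralClosure ℤ_[p] E)
    -- W(k) and W(k)_ℚ with Frobenius σK preserving W(k)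
    (K : Type) [Field K] [Algebra ℚ_[p] K]
    (A : Type) [CommRing A] [IsDomain A] [Algebra A K] [IsFractionRing A K]
    [IsDiscreteValuationRing A]
    (hpA : Irreducible (p : A))
    (σK : K ≃ₐ[ℚ_[p]] K)
    (hσA : ∀ a : A, ∃ a' : A, σK (algebraMap A K a) = algebraMap A K a')
    -- N_k = C ⊗_{ℚ_p} W(k)_ℚ
    (N : Type) [AddCommGroup N] [Module K N] [Module A N] [IsScalarTower A K N]
    [Module ℚ_[p] N]
    (ι : C →ₗ[ℚ_[p]] N)
    (bC : Module.Basis (Fin (2 * n)) ℚ_[p] C) (bN : Module.Basis (Fin (2 * n)) K N)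
    (hb : ∀ j, bN j = ι (bC j))
    -- τ_k = id_C ⊗ σK
    (τ : N ≃+ N) (hτsl : ∀ (c : K) (x : N), τ (c • x) = σK c • τ x)
    (hτι : ∀ v : C, τ (ι v) = ι v)
    -- the action Π of π on N_k
    (Pn : N →ₗ[K] N) (hPι : ∀ v : C, Pn (ι v) = ι (π • v))
    -- the W(k)_ℚ-bilinear extension BN of ⟨·,·⟩
    (BN : LinearMap.BilinForm K N)
    (hBι : ∀ v w : C, BN (ι v) (ι w)
      = algebraMap ℚ_[p] K (2⁻¹ * Algebra.trace ℚ_[p] E (π⁻¹ * h v w)))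
    -- M ⊆ Λ_k a W(k)-lattice with M^∨ ⊆ M
    (M : Submodule A N)
    (hMΛ : M ≤ Submodule.span A (ι '' (Λ : Set C)))
    (Md : Set N) (hMd : Md = {x : N | ∀ y ∈ M, ∃ a : A, BN x y = algebraMap A K a})
    (hMdual : Md ⊆ (M : Set N)) :
    -- M is stable under Π, Π∘τ_k and τ_k⁻¹∘Π
    ((∀ x ∈ M, Pn x ∈ M) ∧ (∀ x ∈ M, Pn (τ x) ∈ M) ∧ (∀ x ∈ M, τ.symm (Pn x) ∈ M)) ∧
    -- and so is M^∨
    ((∀ x ∈ Md, Pn x ∈ Md) ∧ (∀ x ∈ Md, Pn (τ x) ∈ Md) ∧ (∀ x ∈ Md, τ.symm (Pn x) ∈ Md)) := by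
  obtain ⟨π₀, hπ₀, hπ₀norm⟩ := hπ
  set Λk := span A (ι '' (Λ : Set C))
  have hσK : ∀ x ∈ (1 : Submodule A K), σK x ∈ (1 : Submodule A K) := by
    intro x hx
    obtain ⟨a, rfl⟩ := Submodule.mem_one.mp hx
    obtain ⟨a', ha'⟩ := hσA a
    exact Submodule.mem_one.mpr ⟨a', ha'.symm⟩
  have hPΛk : MapsTo Pn Λk (BN.dualSubmodule Λk) := by
    refine BN.mapsTo_span_dualSubmodule_span ?_
    rintro _ ⟨v, hv, rfl⟩ _ ⟨w, hw, rfl⟩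
    rw [hPι, hBι]
    exact algebraMap_padicInt_mem_one hp2 hpA
      ⟨_, norm_two_inv_mul_trace_inv_mul_le_one hp2 hrank σ hσπ hπ₀ hπ₀norm (hΛ1 v hv w hw)⟩
  have hτΛk : MapsTo τ Λk Λk :=
    mapsTo_span_of_semilinear (σ := (σK : K →+* K)) hσK τ.toAddMonoidHom hτsl
      (by rintro _ ⟨v, -, rfl⟩; exact hτι v)
  have hτBN : ∀ x, ∀ y ∈ ι '' (Λ : Set C), BN (τ x) y = σK (BN x y) := by
    rintro x _ ⟨w, -, rfl⟩
    exact BN.apply_semilinear_left bN σK τ.toAddMonoidHom hτsl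
      (fun j ↦ by rw [hb]; exact hτι _) (fun j ↦ by rw [hb, hBι]; exact σK.commutes _) x
  obtain rfl : Md = BN.dualSubmodule M := by
    ext x
    simp only [hMd, mem_ofPred_eq, SetLike.mem_coe, LinearMap.BilinForm.mem_dualSubmodule,
      Submodule.mem_one, eq_comm]
  obtain ⟨hP, hPd⟩ := BN.mapsTo_of_mapsTo_dualSubmodule hMΛ hMdual hPΛk
  obtain ⟨hPτ, hPτd⟩ := BN.mapsTo_of_mapsTo_dualSubmodule hMΛ hMdual (hPΛk.comp hτΛk)
  obtain ⟨hτP, hτPd⟩ := BN.mapsTo_of_mapsTo_dualSubmodule hMΛ hMdual (f := τ.symm ∘ Pn)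
    fun x hx ↦ BN.symm_mem_dualSubmodule_span σK.toRingEquiv
      (fun y hy ↦ IsDiscreteValuationRing.symm_mem_one_of_mem_one hpA _ hσK hy) τ hτBN (hPΛk hx)
  exact ⟨⟨hP, hPτ, hτP⟩, hPd, hPτd, hτPd⟩

theorem statement13
    (p : ℕ) [Fact p.Prime] (hp2 : p ≠ 2)
    (E : Type) [Field E] [Algebra ℚ_[p] E] [Algebra ℤ_[p] E] [IsScalarTower ℤ_[p] ℚ_[p] E]
    [FiniteDimensional ℚ_[p] E]
    (σ : E ≃ₐ[ℚ_[p]] E) (π : E) (hσπ : σ π = -π)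
    (hπ : ∃ π₀ : ℚ_[p], algebraMap ℚ_[p] E π₀ = π ^ 2 ∧ ‖π₀‖ = (p : ℝ)⁻¹)
    (hrank : Module.finrank ℚ_[p] E = 2)
    (C : Type) [AddCommGroup C] [Module E C] [Module ℚ_[p] C] [Module ℤ_[p] C]
    [IsScalarTower ℚ_[p] E C] [IsScalarTower ℤ_[p] E C] [IsScalarTower ℤ_[p] ℚ_[p] C]
    (n : ℕ) (hn : Module.finrank E C = n)
    (h : C → C → E)
    (haddl : ∀ x x' y, h (x + x') y = h x y + h x' y)
    (hsmull : ∀ (a : E) (x y : C), h (a • x) y = a * h x y)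
    (hherm : ∀ x y, h y x = σ (h x y))
    (hnd : ∀ x, (∀ y, h x y = 0) → x = 0)
    -- Λ is a vertex lattice: an 𝒪_E-lattice with πΛ ⊆ Λ^♯ ⊆ Λ,
    -- where Λ^♯ = {x | ∀ y ∈ Λ, h x y ∈ 𝒪_E}
    (Λ : Submodule ℤ_[p] C)
    (hΛfg : Λ.FG) (hΛfull : Submodule.span ℚ_[p] (Λ : Set C) = ⊤)
    (hΛπ : ∀ x ∈ Λ, π • x ∈ Λ)
    (hΛ1 : ∀ x ∈ Λ, ∀ y ∈ Λ, h (π • x) y ∈ integralClosure ℤ_[p] E)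
    (hΛ2 : ∀ x : C, (∀ y ∈ Λ, h x y ∈ integralClosure ℤ_[p] E) → x ∈ Λ)
    -- W(k) and W(k)_ℚ with Frobenius σK preserving W(k)
    (K : Type) [Field K] [Algebra ℚ_[p] K]
    (A : Type) [CommRing A] [IsDomain A] [Algebra A K] [IsFractionRing A K]
    [IsDiscreteValuationRing A]
    (hpA : Irreducible (p : A))
    (σK : K ≃ₐ[ℚ_[p]] K)
    (hσA : ∀ a : A, ∃ a' : A, σK (algebraMap A K a) = algebraMap A K a')
    -- N_k = C ⊗_{ℚ_p} W(k)_ℚ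
    (N : Type) [AddCommGroup N] [Module K N] [Module A N] [IsScalarTower A K N]
    [Module ℚ_[p] N] [IsScalarTower ℚ_[p] K N]
    (ι : C →ₗ[ℚ_[p]] N)
    (bC : Module.Basis (Fin (2 * n)) ℚ_[p] C) (bN : Module.Basis (Fin (2 * n)) K N)
    (hb : ∀ j, bN j = ι (bC j))
    -- τ_k = id_C ⊗ σK
    (τ : N ≃+ N) (hτsl : ∀ (c : K) (x : N), τ (c • x) = σK c • τ x)
    (hτι : ∀ v : C, τ (ι v) = ι v)
    -- the action Π of π on N_k
    (Pn : N →ₗ[K] N) (hPι : ∀ v : C, Pn (ι v) = ι (π • v))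
    -- the W(k)_ℚ-bilinear extension BN of ⟨·,·⟩
    (BN : LinearMap.BilinForm K N)
    (hBι : ∀ v w : C, BN (ι v) (ι w)
      = algebraMap ℚ_[p] K (2⁻¹ * Algebra.trace ℚ_[p] E (π⁻¹ * h v w)))
    (halt : ∀ x, BN x x = 0)
    (hskew : ∀ x y, BN (Pn x) y = - BN x (Pn y))
    -- M ⊆ Λ_k a W(k)-lattice with M^∨ ⊆ M
    (M : Submodule A N)
    (hMfg : M.FG) (hMfull : Submodule.span K (M : Set N) = ⊤)
    (hMΛ : M ≤ Submodule.span A (ι '' (Λ : Set C)))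
    (Md : Set N) (hMd : Md = {x : N | ∀ y ∈ M, ∃ a : A, BN x y = algebraMap A K a})
    (hMdual : Md ⊆ (M : Set N)) :
    -- M is stable under Π, Π∘τ_k and τ_k⁻¹∘Π
    ((∀ x ∈ M, Pn x ∈ M) ∧ (∀ x ∈ M, Pn (τ x) ∈ M) ∧ (∀ x ∈ M, τ.symm (Pn x) ∈ M)) ∧
    -- and so is M^∨
    ((∀ x ∈ Md, Pn x ∈ Md) ∧ (∀ x ∈ Md, Pn (τ x) ∈ Md) ∧ (∀ x ∈ Md, τ.symm (Pn x) ∈ Md)) :=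
  statement13_general p hp2 E σ π hσπ hπ hrank C n h Λ hΛ1 K A hpA σK hσA N ι bC bN hb τ hτsl hτι Pn
    hPι BN hBι M hMΛ Md hMd hMdual
end

section
/- For every i with 1 ≤ i ≤ m−1: (a) w_i commutes with every element of W_i; (b) ℓ(w_i·u) = i + ℓ(u) for every u ∈ W_i (in particular ℓ(w_i) = i); (c) if x_i ∈ W_i has maximal length among the elements of W_i, then every element of the double coset W_i·w_i·W_i has length at most ℓ(w_i·x_i) = i + ℓ(x_i), i.e. w_i·x_i is a longest element of W_i·w_i·W_i. -/
/-!
Write `w_i = s_{m-i} ⋯ s_{m-1}` with 0-indexed generators. Every letter of `w_i` has Coxeter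
entry 2 with every generator of `W_i`, which gives (a); (c) then follows from (a) and (b), since
`W_i w_i W_i = w_i W_i`.

For (b), multiplying `u ∈ W_i` on the left successively by `s_{m-1}, …, s_{m-i}` raises the
length by one each time, because the new letter `s_k` lies outside the standard parabolic
subgroup `H` generated by the generators of `W_i` and the letters already used. This is Tits'
argument: his permutation representation on `W × ZMod 2` yields a cocycle `ε(x, t) ∈ ZMod 2`,
the parity of the number of occurrences of `t` in the right inversion sequence of any word for
`x`; so `ε(x, t) = 1` whenever `ℓ(x t) < ℓ(x)`, while `ε` vanishes on `H × (W \ H)`.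
Finally `s_k ∉ ⟨s_j : j ≠ k⟩` in type `C_m`: all Coxeter entries of the last node are even, so a
sign character separates it, and any other `s_k` is the only generator whose image in the
symmetric group on `Fin m` moves `{0, …, k}`.
-/

/-- The element `w_i = s_{m+1-i} ⋯ s_m` (1-indexed), i.e. the product of the last `i` simple
reflections in increasing order. -/
def wElt {m : ℕ} (hm : 0 < m) {W : Type} [Group W] {M : CoxeterMatrix (Fin m)}
    (cs : CoxeterSystem M W) (i : ℕ) : W :=
  (List.ofFn fun j : Fin i => cs.simple ⟨(m - i + j.val) % m, Nat.mod_lt _ hm⟩).prod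

/-- The standard parabolic subgroup `W_i` generated by `{s_1, …, s_{m−1−i}}` (1-indexed),
i.e. by the simple reflections with (0-indexed) index `< m − 1 − i`. -/
def WSub {m : ℕ} {W : Type} [Group W] {M : CoxeterMatrix (Fin m)}
    (cs : CoxeterSystem M W) (i : ℕ) : Subgroup W :=
  Subgroup.closure {w | ∃ j : Fin m, j.val < m - 1 - i ∧ w = cs.simple j}

namespace CoxeterSystem

variable {B W : Type*} [Group W] {M : CoxeterMatrix B} (cs : CoxeterSystem M W)

open Classical in
/-- Tits' action of `s_i`: conjugation by `s_i`, with the sign flipped at `t = s_i`. It is defined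
on all of `W` rather than only on the reflections. -/
noncomputable def titsPerm (i : B) : Equiv.Perm (W × ZMod 2) :=
  Function.Involutive.toPerm
    (fun p => (cs.simple i * p.1 * cs.simple i, p.2 + if p.1 = cs.simple i then 1 else 0))
    (by
      rintro ⟨t, ε⟩
      have hconj : cs.simple i * (t * cs.simple i) = cs.simple i ↔ t = cs.simple i := by
        rw [mul_eq_left, mul_eq_one_iff_eq_inv, inv_simple]
      simp only [mul_assoc, simple_mul_simple_cancel_left, simple_mul_simple_self, mul_one]
      simp only [hconj, add_assoc, CharTwo.add_self_eq_zero, add_zero])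

open Classical in
theorem titsPerm_apply (i : B) (t : W) (ε : ZMod 2) :
    cs.titsPerm i (t, ε) =
      (cs.simple i * t * cs.simple i, ε + if t = cs.simple i then 1 else 0) :=
  rfl

open Classical in
theorem titsPerm_mul_pow_apply (i j : B) (k : ℕ) (t : W) (ε : ZMod 2) :
    ((cs.titsPerm i * cs.titsPerm j) ^ k) (t, ε) =
      ((cs.simple i * cs.simple j) ^ k * t * ((cs.simple i * cs.simple j) ^ k)⁻¹,
        ε + ∑ r ∈ Finset.range (2 * k),
          if t = (cs.simple j * cs.simple i) ^ r * cs.simple j then 1 else 0) := by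
  induction k generalizing t ε with
  | zero => simp
  | succ k ih =>
    rw [pow_succ, Equiv.Perm.mul_apply, Equiv.Perm.mul_apply, titsPerm_apply, titsPerm_apply, ih,
      show 2 * (k + 1) = 2 * k + 1 + 1 by ring, Finset.sum_range_succ', Finset.sum_range_succ']
    set a := cs.simple i
    set b := cs.simple j
    have ha : a⁻¹ = a := cs.inv_simple i
    have hb : b⁻¹ = b := cs.inv_simple j
    have hconj (g x : W) : g⁻¹ * t * g = x ↔ t = g * x * g⁻¹ := by
      constructor <;> rintro rfl <;> group
    -- conjugating by `a * b` shifts the index `r` of `(b * a) ^ r * b` by two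
    have hshift (r : ℕ) : a * (b * t * b) * a = (b * a) ^ r * b ↔
        t = (b * a) ^ (r + 2) * b := by
      have hrhs : (b * a) ^ (r + 2) * b = (b * a) * ((b * a) ^ r * b) * (b * a)⁻¹ := by
        rw [pow_succ, pow_succ']; simp [mul_assoc, ha, hb]
      rw [hrhs, ← hconj]; simp [mul_assoc, ha, hb]
    have hone : b * t * b = a ↔ t = b * a * b := by
      simpa [hb] using hconj b a
    simp only [hshift, hone, pow_zero, one_mul, zero_add, pow_one, Prod.mk.injEq]
    constructor
    · simp [pow_succ, mul_assoc, ha, hb]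
    · ring

theorem isLiftable_titsPerm : M.IsLiftable cs.titsPerm := by
  classical
  intro i j
  ext ⟨t, ε⟩ : 1
  rw [titsPerm_mul_pow_apply, cs.simple_mul_simple_pow, two_mul, Finset.sum_range_add]
  -- the reflections `(s_j s_i) ^ r * s_j` are periodic in `r` with period `M i j`
  have hperiodic (r : ℕ) :
      (cs.simple j * cs.simple i) ^ (M i j + r) = (cs.simple j * cs.simple i) ^ r := by
    rw [pow_add, cs.simple_mul_simple_pow', one_mul]
  simp [hperiodic, CharTwo.add_self_eq_zero]

noncomputable def titsRep : W →* Equiv.Perm (W × ZMod 2) :=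
  cs.lift ⟨cs.titsPerm, cs.isLiftable_titsPerm⟩

open Classical in
theorem titsRep_wordProd (ω : List B) (t : W) (ε : ZMod 2) :
    cs.titsRep (cs.wordProd ω) (t, ε) =
      (cs.wordProd ω * t * (cs.wordProd ω)⁻¹, ε + (cs.rightInvSeq ω).count t) := by
  induction ω generalizing t ε with
  | nil => simp
  | cons a ω ih =>
    have hconj : cs.wordProd ω * t * (cs.wordProd ω)⁻¹ = cs.simple a ↔
        (cs.wordProd ω)⁻¹ * cs.simple a * cs.wordProd ω = t := by
      constructor <;> intro h <;> rw [← h] <;> group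
    rw [wordProd_cons, map_mul, Equiv.Perm.mul_apply, ih, titsRep, lift_apply_simple,
      titsPerm_apply, rightInvSeq, List.count_cons]
    simp only [hconj, beq_iff_eq, Nat.cast_add, Nat.cast_ite, Nat.cast_one, Nat.cast_zero,
      add_assoc]
    simp only [mul_inv_rev, inv_simple, mul_assoc]

noncomputable def inversionParity (w t : W) : ZMod 2 := (cs.titsRep w (t, 0)).2

theorem titsRep_apply (w t : W) (ε : ZMod 2) :
    cs.titsRep w (t, ε) = (w * t * w⁻¹, ε + cs.inversionParity w t) := by
  obtain ⟨ω, rfl⟩ := cs.wordProd_surjective w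
  rw [inversionParity, titsRep_wordProd, titsRep_wordProd, zero_add]

open Classical in
theorem inversionParity_wordProd (ω : List B) (t : W) :
    cs.inversionParity (cs.wordProd ω) t = (cs.rightInvSeq ω).count t := by
  rw [inversionParity, titsRep_wordProd, zero_add]

theorem inversionParity_mul (w₁ w₂ t : W) :
    cs.inversionParity (w₁ * w₂) t =
      cs.inversionParity w₂ t + cs.inversionParity w₁ (w₂ * t * w₂⁻¹) := by
  rw [inversionParity, map_mul, Equiv.Perm.mul_apply, titsRep_apply, titsRep_apply, zero_add]

open Classical in
theorem inversionParity_simple (i : B) (t : W) :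
    cs.inversionParity (cs.simple i) t = if t = cs.simple i then 1 else 0 := by
  rw [inversionParity, titsRep, lift_apply_simple, titsPerm_apply, zero_add]

theorem inversionParity_one (t : W) : cs.inversionParity 1 t = 0 := by
  rw [inversionParity, map_one, Equiv.Perm.one_apply]

theorem isRightInversion_of_inversionParity_eq_one {w t : W}
    (h : cs.inversionParity w t = 1) : cs.IsRightInversion w t := by
  classical
  obtain ⟨ω, hω, rfl⟩ := cs.exists_isReduced w
  refine cs.isRightInversion_of_mem_rightInvSeq hω
    (List.count_pos_iff.mp (Nat.pos_of_ne_zero fun h0 => zero_ne_one (α := ZMod 2) ?_))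
  rwa [inversionParity_wordProd, h0, Nat.cast_zero] at h

theorem length_mul_simple_of_inversionParity_eq_zero {w : W} {i : B}
    (h : cs.inversionParity w (cs.simple i) = 0) :
    cs.length (w * cs.simple i) = cs.length w + 1 := by
  refine (cs.length_mul_simple w i).resolve_right fun hlt => ?_
  -- otherwise `s_i` would be a right inversion of `w * s_i`, which is shorter than `w`
  have h1 : cs.inversionParity (w * cs.simple i) (cs.simple i) = 1 := by
    rw [inversionParity_mul, inversionParity_simple, if_pos rfl, inv_simple,
      simple_mul_simple_cancel_right, h, add_zero]
  have h2 := (cs.isRightInversion_of_inversionParity_eq_one h1).2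
  rw [simple_mul_simple_cancel_right] at h2
  omega

theorem inversionParity_eq_zero_of_mem_closure {J : Set B} {x t : W}
    (hx : x ∈ Subgroup.closure (cs.simple '' J)) (ht : t ∉ Subgroup.closure (cs.simple '' J)) :
    cs.inversionParity x t = 0 := by
  set H := Subgroup.closure (cs.simple '' J)
  have hconj {y t : W} (hy : y ∈ H) (ht : t ∉ H) : y * t * y⁻¹ ∉ H := fun h =>
    ht (by simpa [mul_assoc] using H.mul_mem (H.mul_mem (H.inv_mem hy) h) hy)
  induction hx using Subgroup.closure_induction generalizing t with
  | mem y hy =>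
    obtain ⟨j, hj, rfl⟩ := hy
    rw [inversionParity_simple, if_neg]
    rintro rfl
    exact ht (Subgroup.subset_closure ⟨j, hj, rfl⟩)
  | one => exact cs.inversionParity_one t
  | mul y z _ hz ihy ihz => rw [inversionParity_mul, ihz ht, ihy (hconj hz ht), add_zero]
  | inv y hy ih =>
    have h := cs.inversionParity_mul y y⁻¹ t
    rw [mul_inv_cancel, inversionParity_one, ih (hconj (H.inv_mem hy) ht), add_zero] at h
    exact h.symm

theorem length_simple_mul_of_mem_closure {J : Set B} {k : B} {v : W}
    (hv : v ∈ Subgroup.closure (cs.simple '' J))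
    (hk : cs.simple k ∉ Subgroup.closure (cs.simple '' J)) :
    cs.length (cs.simple k * v) = cs.length v + 1 := by
  rw [← cs.length_inv, mul_inv_rev, inv_simple, ← cs.length_inv v]
  exact cs.length_mul_simple_of_inversionParity_eq_zero
    (cs.inversionParity_eq_zero_of_mem_closure (inv_mem hv) hk)

theorem wordProd_mem_closure {J : Set B} {ω : List B} (hω : ∀ j ∈ ω, j ∈ J) :
    cs.wordProd ω ∈ Subgroup.closure (cs.simple '' J) := by
  refine Subgroup.list_prod_mem _ fun _ hx => ?_
  obtain ⟨j, hj, rfl⟩ := List.mem_map.mp hx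
  exact Subgroup.subset_closure ⟨j, hω j hj, rfl⟩

theorem length_wordProd_mul_of_nodup
    (hS : ∀ k, cs.simple k ∉ Subgroup.closure (cs.simple '' {k}ᶜ))
    {J : Set B} {ω : List B} (hω : ω.Nodup) (hωJ : ∀ k ∈ ω, k ∉ J) {v : W}
    (hv : v ∈ Subgroup.closure (cs.simple '' J)) :
    cs.length (cs.wordProd ω * v) = ω.length + cs.length v := by
  induction ω with
  | nil => simp
  | cons a ω ih =>
    obtain ⟨haω, hω⟩ := List.nodup_cons.mp hω
    have hmem : cs.wordProd ω * v ∈ Subgroup.closure (cs.simple '' (J ∪ {l | l ∈ ω})) :=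
      mul_mem (cs.wordProd_mem_closure fun j hj => Or.inr hj)
        (Subgroup.closure_mono (Set.image_mono Set.subset_union_left) hv)
    have ha : cs.simple a ∉ Subgroup.closure (cs.simple '' (J ∪ {l | l ∈ ω})) := fun h =>
      hS a (Subgroup.closure_mono (Set.image_mono (by
        rintro l hl rfl; exact hl.elim (hωJ l List.mem_cons_self) haω)) h)
    rw [wordProd_cons, mul_assoc, cs.length_simple_mul_of_mem_closure hmem ha,
      ih hω fun k hk => hωJ k (List.mem_cons_of_mem a hk), List.length_cons]
    ring

theorem simple_notMem_closure_compl_of_even {k : B} (heven : ∀ j ≠ k, Even (M j k)) :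
    cs.simple k ∉ Subgroup.closure (cs.simple '' {k}ᶜ) := by
  classical
  let sign : B → ℤˣ := fun j => if j = k then -1 else 1
  have hsign : M.IsLiftable sign := by
    intro i j
    by_cases hi : i = k <;> by_cases hj : j = k
    · subst hi hj; simp [sign]
    · simp [sign, hi, hj, M.symmetric k j, (heven j hj).neg_one_pow]
    · simp [sign, hi, hj, (heven i hi).neg_one_pow]
    · simp [sign, hi, hj]
  have hker : Subgroup.closure (cs.simple '' {k}ᶜ) ≤ (cs.lift ⟨sign, hsign⟩).ker := by
    rw [Subgroup.closure_le]
    rintro _ ⟨j, hj, rfl⟩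
    simp [lift_apply_simple, sign, Set.mem_compl_singleton_iff.mp hj]
  intro h
  have := hker h
  simp [lift_apply_simple, sign] at this

theorem commute_simple_of_eq_two {i j : B} (h : M i j = 2) :
    Commute (cs.simple i) (cs.simple j) := by
  have hsq := cs.simple_mul_simple_pow i j
  rw [h, sq, mul_eq_one_iff_eq_inv, mul_inv_rev, inv_simple, inv_simple] at hsq
  exact hsq

theorem wordProd_mem_centralizer {J : Set B} {ω : List B} (h : ∀ l ∈ ω, ∀ j ∈ J, M l j = 2) :
    cs.wordProd ω ∈ Subgroup.centralizer (Subgroup.closure (cs.simple '' J) : Set W) := by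
  rw [Subgroup.centralizer_closure]
  refine Subgroup.list_prod_mem _ fun _ hx => ?_
  obtain ⟨l, hl, rfl⟩ := List.mem_map.mp hx
  rw [Subgroup.mem_centralizer_iff]
  rintro _ ⟨j, hj, rfl⟩
  exact (cs.commute_simple_of_eq_two (h l hl j hj)).symm.eq

end CoxeterSystem

def CoxeterMatrix.IsTypeC {m : ℕ} (M : CoxeterMatrix (Fin m)) : Prop :=
  ∀ i j : Fin m, M i j =
    if i = j then 1
    else if i.val + 1 = j.val ∨ j.val + 1 = i.val then
      (if i.val = m - 1 ∨ j.val = m - 1 then 4 else 3)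
    else 2

namespace Fin

def adjSwap {m : ℕ} (j : Fin m) : Equiv.Perm (Fin m) :=
  if h : j.val + 1 < m then Equiv.swap j ⟨j.val + 1, h⟩ else 1

variable {m : ℕ}

theorem adjSwap_of_not_lt {j : Fin m} (h : ¬ j.val + 1 < m) : adjSwap j = 1 := dif_neg h

theorem adjSwap_mul_self (j : Fin m) : adjSwap j * adjSwap j = 1 := by
  unfold adjSwap; split_ifs <;> simp

theorem adjSwap_apply_le_iff {j k x : Fin m} (hjk : j ≠ k) : adjSwap j x ≤ k ↔ x ≤ k := by
  unfold adjSwap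
  split_ifs
  · rw [Equiv.swap_apply_def]
    split_ifs <;> simp only [Fin.ext_iff, Fin.le_iff_val_le_val] at * <;> omega
  · rfl

theorem commute_adjSwap {i j : Fin m} (hij : i.val + 1 ≠ j.val) (hji : j.val + 1 ≠ i.val) :
    Commute (adjSwap i) (adjSwap j) := by
  unfold adjSwap
  split_ifs
  · ext x
    simp only [Equiv.Perm.mul_apply, Equiv.swap_apply_def]
    split_ifs <;> simp only [Fin.ext_iff] at * <;> omega
  all_goals simp

theorem adjSwap_mul_adjSwap_succ_pow_three {i j : Fin m} (hij : i.val + 1 = j.val)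
    (hj : j.val + 1 < m) : (adjSwap i * adjSwap j) ^ 3 = 1 := by
  have hi : i.val + 1 < m := by omega
  rw [adjSwap, adjSwap, dif_pos hi, dif_pos hj,
    show (⟨i.val + 1, hi⟩ : Fin m) = j from Fin.ext hij, Equiv.swap_comm i j]
  have hne (a b : Fin m) (h : a.val ≠ b.val) : a ≠ b := Fin.ne_of_val_ne h
  have h3 := Equiv.Perm.isThreeCycle_swap_mul_swap_same (hne j i (by omega))
    (hne j ⟨j.val + 1, hj⟩ (by simp)) (hne i ⟨j.val + 1, hj⟩ (by simp; omega))
  rw [← h3.orderOf, pow_orderOf_eq_one]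

theorem adjSwap_mul_adjSwap_pow_three {i j : Fin m}
    (hadj : i.val + 1 = j.val ∨ j.val + 1 = i.val) (hi : i.val + 1 < m) (hj : j.val + 1 < m) :
    (adjSwap i * adjSwap j) ^ 3 = 1 := by
  rcases hadj with h | h
  · exact adjSwap_mul_adjSwap_succ_pow_three h hj
  · rw [← inv_inj, inv_one, ← inv_pow, mul_inv_rev,
      inv_eq_of_mul_eq_one_right (adjSwap_mul_self i),
      inv_eq_of_mul_eq_one_right (adjSwap_mul_self j), adjSwap_mul_adjSwap_succ_pow_three h hi]

end Fin

theorem Commute.mul_pow_eq_one_of_even {G : Type*} [Monoid G] {x y : G} (h : Commute x y)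
    (hx : x * x = 1) (hy : y * y = 1) {n : ℕ} (hn : Even n) : (x * y) ^ n = 1 := by
  obtain ⟨k, rfl⟩ := hn
  rw [← two_mul, pow_mul, h.mul_pow, sq, sq, hx, hy, one_mul, one_pow]

theorem CoxeterMatrix.IsTypeC.isLiftable_adjSwap {m : ℕ} {M : CoxeterMatrix (Fin m)}
    (hM : M.IsTypeC) : M.IsLiftable Fin.adjSwap := by
  intro i j
  have hinv := Fin.adjSwap_mul_self (m := m)
  rw [hM i j]
  split_ifs with hij hadj hlast
  · rw [hij, pow_one, hinv]
  · refine Commute.mul_pow_eq_one_of_even ?_ (hinv i) (hinv j) (by decide)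
    rcases hlast with h | h
    · rw [Fin.adjSwap_of_not_lt (by omega : ¬ i.val + 1 < m)]; exact Commute.one_left _
    · rw [Fin.adjSwap_of_not_lt (by omega : ¬ j.val + 1 < m)]; exact Commute.one_right _
  · exact Fin.adjSwap_mul_adjSwap_pow_three hadj (by omega) (by omega)
  · exact Commute.mul_pow_eq_one_of_even (Fin.commute_adjSwap (by omega) (by omega))
      (hinv i) (hinv j) (by decide)

open scoped Pointwise in
theorem CoxeterSystem.simple_notMem_closure_compl_of_isTypeC {m : ℕ} {W : Type*} [Group W]
    {M : CoxeterMatrix (Fin m)} (hM : M.IsTypeC) (cs : CoxeterSystem M W) (k : Fin m) :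
    cs.simple k ∉ Subgroup.closure (cs.simple '' {k}ᶜ) := by
  by_cases hk : k.val + 1 < m
  · -- in the permutation representation, `s_k` is the only generator moving `Set.Iic k`
    let H := (MulAction.stabilizer (Equiv.Perm (Fin m)) (Set.Iic k)).comap
      (cs.lift ⟨Fin.adjSwap, hM.isLiftable_adjSwap⟩)
    have hmem (j : Fin m) : cs.simple j ∈ H ↔ ∀ x, Fin.adjSwap j x ≤ k ↔ x ≤ k := by
      simp only [H, Subgroup.mem_comap, lift_apply_simple, MulAction.mem_stabilizer_set,
        Equiv.Perm.smul_def, Set.mem_Iic]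
    have hle : Subgroup.closure (cs.simple '' {k}ᶜ) ≤ H := by
      rw [Subgroup.closure_le]
      rintro _ ⟨j, hj, rfl⟩
      exact (hmem j).mpr fun x => Fin.adjSwap_apply_le_iff hj
    intro h
    have hkk := ((hmem k).mp (hle h) k).mpr le_rfl
    rw [Fin.adjSwap, dif_pos hk, Equiv.swap_apply_left, Fin.le_iff_val_le_val] at hkk
    exact absurd hkk (by simp)
  · refine cs.simple_notMem_closure_compl_of_even fun j hj => ?_
    rw [hM j k, if_neg hj]
    split_ifs with _ hlast
    · decide
    · exact absurd (Or.inr (by omega)) hlast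
    · decide

section LastLetters

variable {m : ℕ} {W : Type} [Group W] {M : CoxeterMatrix (Fin m)} (cs : CoxeterSystem M W)

theorem WSub_eq_closure_image (i : ℕ) :
    WSub cs i = Subgroup.closure (cs.simple '' {j | j.val < m - 1 - i}) := by
  rw [WSub]
  congr 1
  ext w
  simp [eq_comm]

theorem exists_wordProd_eq_wElt (hm : 0 < m) (i : ℕ) (hi : i ≤ m) :
    ∃ ω : List (Fin m), wElt hm cs i = cs.wordProd ω ∧ ω.length = i ∧ ω.Nodup ∧
      ∀ l ∈ ω, m - i ≤ l.val := by
  have hval (j : Fin i) : (m - i + j.val) % m = m - i + j.val := Nat.mod_eq_of_lt (by omega)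
  refine ⟨List.ofFn fun j : Fin i => ⟨(m - i + j.val) % m, Nat.mod_lt _ hm⟩, ?_,
    List.length_ofFn, List.nodup_ofFn.mpr fun j j' h => ?_, fun l hl => ?_⟩
  · rw [wElt, CoxeterSystem.wordProd, List.map_ofFn]
    rfl
  · have := congrArg Fin.val h
    simp only [hval] at this
    exact Fin.ext (by omega)
  · obtain ⟨j, rfl⟩ := List.mem_ofFn.mp hl
    simp [hval]

end LastLetters

theorem statement17
    (m : ℕ) (hm : 2 ≤ m)
    (W : Type) [Group W] (M : CoxeterMatrix (Fin m))
    -- the Coxeter matrix of type C_m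
    (hM : ∀ i j : Fin m, M i j =
      if i = j then 1
      else if i.val + 1 = j.val ∨ j.val + 1 = i.val then
        (if i.val = m - 1 ∨ j.val = m - 1 then 4 else 3)
      else 2)
    (cs : CoxeterSystem M W)
    (i : ℕ) (him : i ≤ m - 1) :
    -- (a)
    (∀ u ∈ WSub cs i, wElt (by omega) cs i * u = u * wElt (by omega) cs i) ∧
    -- (b)
    (∀ u ∈ WSub cs i,
      cs.length (wElt (by omega) cs i * u) = i + cs.length u) ∧
    (cs.length (wElt (by omega) cs i) = i) ∧
    -- (c)
    (∀ x ∈ WSub cs i, (∀ u ∈ WSub cs i, cs.length u ≤ cs.length x) →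
      (cs.length (wElt (by omega) cs i * x) = i + cs.length x) ∧
      (∀ a ∈ WSub cs i, ∀ b ∈ WSub cs i,
        cs.length (a * wElt (by omega) cs i * b) ≤ cs.length (wElt (by omega) cs i * x))) := by
  obtain ⟨ω, hwω, hlen, hnodup, hletters⟩ := exists_wordProd_eq_wElt cs (by omega) i (by omega)
  rw [hwω]
  have hWSub := WSub_eq_closure_image cs i
  have hcomm : ∀ u ∈ WSub cs i, cs.wordProd ω * u = u * cs.wordProd ω := by
    intro u hu
    have hcent := cs.wordProd_mem_centralizer (J := {j | j.val < m - 1 - i})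
      fun l hl j (hj : j.val < m - 1 - i) => by
        have := hletters l hl
        rw [hM l j, if_neg (by omega), if_neg (by omega)]
    exact ((Subgroup.mem_centralizer_iff.mp hcent) u (hWSub ▸ hu)).symm
  have hlength : ∀ u ∈ WSub cs i, cs.length (cs.wordProd ω * u) = i + cs.length u := by
    intro u hu
    rw [← hlen]
    exact cs.length_wordProd_mul_of_nodup (cs.simple_notMem_closure_compl_of_isTypeC hM) hnodup
      (fun l hl (hlJ : l.val < m - 1 - i) => by have := hletters l hl; omega) (hWSub ▸ hu)
  refine ⟨hcomm, hlength, by simpa using hlength 1 (one_mem _),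
    fun x hx hmax => ⟨hlength x hx, fun a ha b hb => ?_⟩⟩
  rw [← hcomm a ha, mul_assoc, hlength _ (mul_mem ha hb), hlength x hx]
  exact Nat.add_le_add_left (hmax _ (mul_mem ha hb)) i
end
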